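/- arXiv:2502.02267 — 5 statements merged into one kernel-verified Lean document; each statement's English description precedes it below -/
import Mathlib

section
/- Let n ≥ 1, let ψ be a weak-scaling function as in the context, and let (p_t)_{t>0} satisfy the two-sided bound in the context with constant C. Define the parabolic cone Γᵖ(x) = {(y,t) ∈ ℝⁿ × (0,∞) : |x−y| ≤ φ(t)}. Then there exists a constant C' such that for every measurable f ≥ 0 and every x ∈ ℝⁿ, sup_{(y,t)∈Γᵖ(x)} ∫_{ℝⁿ} p_t(y−z) f(z) dz ≤ C' M f(x), where M denotes the Hardy–Littlewood maximal function M f(x) = sup_{s>0} |B(x,s)|⁻¹ ∫_{B(x,s)} |f(z)| dz with respect to Lebesgue measure. -/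
open MeasureTheory Metric ENNReal

/-- (Global) Hardy–Littlewood maximal function with respect to a measure `μ`. -/
noncomputable def maxFn {X : Type*} [MetricSpace X] [MeasurableSpace X]
    (μ : Measure X) (f : X → ℝ) (x : X) : ℝ≥0∞ :=
  ⨆ (s : ℝ) (_ : 0 < s),
    (μ (ball x s))⁻¹ * ∫⁻ y in ball x s, ENNReal.ofReal |f y| ∂μ

set_option maxHeartbeats 1000000 in
/-- Non-tangential maximal inequality for weak-scaling nonlocal heat
kernels: the supremum of `∫ p_t(y−z) f(z) dz` over the parabolic cone
`Γᵖ(x) = {(y,t) : |x−y| ≤ φ(t)}`, with `φ(t) = 1/ψ⁻(1/t)`, is dominated by the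
Hardy-Littlewood maximal function of `f` at `x`. -/
theorem stmt_5 (n : ℕ) (hn : 1 ≤ n)
    (ψ ψi : ℝ → ℝ)
    (hψ_pos : ∀ θ : ℝ, 0 < θ → 0 < ψ θ)
    (hψ_cont : ContinuousOn ψ (Set.Ioi 0))
    (hψ_mono : StrictMonoOn ψ (Set.Ioi 0))
    (hψi_pos : ∀ s : ℝ, 0 < s → 0 < ψi s)
    (hψi_right : ∀ s : ℝ, 0 < s → ψ (ψi s) = s)
    (hψi_left : ∀ θ : ℝ, 0 < θ → ψi (ψ θ) = θ)
    (al ab cl Cb : ℝ)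
    (hal : 0 < al) (halab : al ≤ ab) (hab : ab < 2)
    (hcl : 0 < cl) (hcl1 : cl ≤ 1) (hCb : 1 ≤ Cb)
    (hscale : ∀ lam θ : ℝ, 1 ≤ lam → 0 < θ →
      cl * lam ^ al * ψ θ ≤ ψ (lam * θ) ∧ ψ (lam * θ) ≤ Cb * lam ^ ab * ψ θ)
    (p : ℝ → EuclideanSpace ℝ (Fin n) → ℝ)
    (hp_nonneg : ∀ t : ℝ, 0 < t → ∀ x, 0 ≤ p t x)
    (hp_meas : ∀ t : ℝ, 0 < t → Measurable (p t))
    (C : ℝ) (hC : 1 ≤ C)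
    (hbound : ∀ t : ℝ, 0 < t → ∀ x : EuclideanSpace ℝ (Fin n), x ≠ 0 →
      C⁻¹ * min ((ψi (1 / t)) ^ n) (t * ψ (‖x‖⁻¹) / ‖x‖ ^ n) ≤ p t x ∧
      p t x ≤ C * min ((ψi (1 / t)) ^ n) (t * ψ (‖x‖⁻¹) / ‖x‖ ^ n)) :
    ∃ C' : ℝ, 0 < C' ∧
      ∀ f : EuclideanSpace ℝ (Fin n) → ℝ, Measurable f → (∀ z, 0 ≤ f z) →
      ∀ x : EuclideanSpace ℝ (Fin n),
        (⨆ (t : ℝ) (_ : 0 < t) (y : EuclideanSpace ℝ (Fin n))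
            (_ : ‖x - y‖ ≤ (ψi (1 / t))⁻¹),
            ∫⁻ z, ENNReal.ofReal (p t (y - z) * f z) ∂volume)
          ≤ ENNReal.ofReal C' * maxFn volume f x := by
  classical
  have hC0 : (0:ℝ) < C := lt_of_lt_of_le one_pos hC
  haveI : Nontrivial (EuclideanSpace ℝ (Fin n)) :=
    ⟨EuclideanSpace.single ⟨0, hn⟩ 1, 0, by
      intro h
      have := congrArg (fun v => v ⟨0, hn⟩) h
      simp [EuclideanSpace.single] at this⟩
  set ω : ℝ≥0∞ := volume (ball (0 : EuclideanSpace ℝ (Fin n)) 1) with hωdef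
  have hω_pos : 0 < ω := measure_ball_pos _ _ one_pos
  have hω_top : ω ≠ ⊤ := measure_ball_lt_top.ne
  set ωr : ℝ := ω.toReal with hωrdef
  have hωr_pos : 0 < ωr := ENNReal.toReal_pos hω_pos.ne' hω_top
  have hωof : ENNReal.ofReal ωr = ω := ENNReal.ofReal_toReal hω_top
  set q : ℝ := ((2:ℝ) ^ al)⁻¹ with hqdef
  have h2al : 1 < (2:ℝ) ^ al :=
    (Real.one_lt_rpow_iff_of_pos (by norm_num)).2 (Or.inl ⟨by norm_num, hal⟩)
  have hq0 : 0 < q := inv_pos.2 (lt_trans one_pos h2al)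
  have hq1 : q < 1 := by rw [hqdef]; exact inv_lt_one_of_one_lt₀ h2al
  have hvol : ∀ (c : EuclideanSpace ℝ (Fin n)) (s : ℝ), 0 ≤ s →
      volume (ball c s) = ENNReal.ofReal (s ^ n) * ω := by
    intro c s hs
    rw [Measure.addHaar_ball volume c hs, finrank_euclideanSpace_fin]
  set K : ℝ := C * cl⁻¹ * 8 ^ n * ωr with hKdef
  have hKpos : 0 < K := by positivity
  set D0 : ℝ := C * 4 ^ n * ωr with hD0def
  have hD0pos : 0 < D0 := by positivity
  refine ⟨D0 + K * (1 - q)⁻¹, by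
    have h1 : 0 < (1 - q)⁻¹ := inv_pos.2 (by linarith)
    nlinarith, ?_⟩
  intro f hf hf0 x
  set M := maxFn volume f x with hMdef
  have hMb : ∀ s : ℝ, 0 < s →
      ∫⁻ z in ball x s, ENNReal.ofReal |f z| ∂volume ≤ volume (ball x s) * M := by
    intro s hs
    have h1 : (volume (ball x s))⁻¹ * ∫⁻ z in ball x s, ENNReal.ofReal |f z| ∂volume ≤ M := by
      rw [hMdef, maxFn]
      exact le_iSup_of_le s (le_iSup_of_le hs le_rfl)
    have hne : volume (ball x s) ≠ 0 := (measure_ball_pos _ _ hs).ne'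
    have htop : volume (ball x s) ≠ ⊤ := measure_ball_lt_top.ne
    calc ∫⁻ z in ball x s, ENNReal.ofReal |f z| ∂volume
        = volume (ball x s) * ((volume (ball x s))⁻¹ *
            ∫⁻ z in ball x s, ENNReal.ofReal |f z| ∂volume) := by
          rw [← mul_assoc, ENNReal.mul_inv_cancel hne htop, one_mul]
      _ ≤ volume (ball x s) * M := mul_le_mul_right h1 _
  refine iSup_le fun t => iSup_le fun ht => iSup_le fun y => iSup_le fun hy => ?_
  set a := ψi (1/t) with hadef
  have ha : 0 < a := hψi_pos _ (by positivity)
  set r := a⁻¹ with hrdef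
  have hr : 0 < r := inv_pos.2 ha
  have hψa : ψ a = 1/t := hψi_right _ (by positivity)
  have hyx : dist y x ≤ r := by
    rw [dist_eq_norm, norm_sub_rev]; exact hy
  -- generic estimate over a set with a pointwise kernel bound
  have hkey : ∀ (S : Set (EuclideanSpace ℝ (Fin n))) (cc RR : ℝ), 0 ≤ cc → 0 < RR →
      MeasurableSet S → S ⊆ ball x RR →
      (∀ z ∈ S, z ≠ y → p t (y - z) ≤ cc) →
      ∫⁻ z in S, ENNReal.ofReal (p t (y - z) * f z) ∂volume
        ≤ ENNReal.ofReal (cc * RR ^ n * ωr) * M := by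
    intro S cc RR hcc hRR hSm hSsub hk
    have hae : ∀ᵐ z ∂(volume.restrict S),
        ENNReal.ofReal (p t (y - z) * f z) ≤ ENNReal.ofReal cc * ENNReal.ofReal |f z| := by
      have h1 : ∀ᵐ z ∂(volume.restrict S), z ∈ S := ae_restrict_mem hSm
      have h2 : ∀ᵐ z ∂(volume.restrict S), z ≠ y := by
        refine ae_restrict_of_ae ?_
        have hset : {z : EuclideanSpace ℝ (Fin n) | ¬ z ≠ y} = {y} := by ext z; simp
        rw [ae_iff, hset]
        exact measure_singleton y
      filter_upwards [h1, h2] with z hz hzy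
      have hle : p t (y - z) * f z ≤ cc * f z :=
        mul_le_mul_of_nonneg_right (hk z hz hzy) (hf0 z)
      calc ENNReal.ofReal (p t (y - z) * f z) ≤ ENNReal.ofReal (cc * f z) :=
            ENNReal.ofReal_le_ofReal hle
        _ = ENNReal.ofReal cc * ENNReal.ofReal (f z) := ENNReal.ofReal_mul hcc
        _ ≤ ENNReal.ofReal cc * ENNReal.ofReal |f z| :=
            mul_le_mul_right (ENNReal.ofReal_le_ofReal (le_abs_self _)) _
    calc ∫⁻ z in S, ENNReal.ofReal (p t (y - z) * f z) ∂volume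
        ≤ ∫⁻ z in S, ENNReal.ofReal cc * ENNReal.ofReal |f z| ∂volume := lintegral_mono_ae hae
      _ = ENNReal.ofReal cc * ∫⁻ z in S, ENNReal.ofReal |f z| ∂volume :=
          lintegral_const_mul' _ _ ENNReal.ofReal_ne_top
      _ ≤ ENNReal.ofReal cc * ∫⁻ z in ball x RR, ENNReal.ofReal |f z| ∂volume :=
          mul_le_mul_right (lintegral_mono_set hSsub) _
      _ ≤ ENNReal.ofReal cc * (volume (ball x RR) * M) := mul_le_mul_right (hMb RR hRR) _
      _ = ENNReal.ofReal cc * (ENNReal.ofReal (RR ^ n) * (ENNReal.ofReal ωr * M)) := by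
          rw [hvol x RR hRR.le, ← hωof]; ring
      _ = ENNReal.ofReal (cc * RR ^ n * ωr) * M := by
          rw [ENNReal.ofReal_mul (by positivity), ENNReal.ofReal_mul hcc]; ring
  -- the scaling estimate on annuli
  have hpow2 : ∀ j : ℕ, ((2:ℝ) ^ j : ℝ) ^ al = ((2:ℝ) ^ al) ^ j := by
    intro j
    rw [← Real.rpow_natCast (2:ℝ) j, ← Real.rpow_natCast ((2:ℝ) ^ al) j,
      ← Real.rpow_mul (by norm_num), ← Real.rpow_mul (by norm_num), mul_comm]
  have hψannulus : ∀ j : ℕ, ψ (a / 2 ^ j) ≤ cl⁻¹ * q ^ j * (1/t) := by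
    intro j
    have h2j : (1:ℝ) ≤ 2 ^ j := one_le_pow₀ (by norm_num)
    have h2jpos : (0:ℝ) < 2 ^ j := by positivity
    have hθ : 0 < a / 2 ^ j := by positivity
    have hsc := (hscale (2 ^ j) (a / 2 ^ j) h2j hθ).1
    have heq : (2:ℝ) ^ j * (a / 2 ^ j) = a := by field_simp
    rw [heq, hψa, hpow2 j] at hsc
    have hpos : 0 < cl * ((2:ℝ) ^ al) ^ j := by positivity
    have h1 : ψ (a / 2 ^ j) ≤ (1/t) / (cl * ((2:ℝ) ^ al) ^ j) := by
      rw [le_div_iff₀ hpos]; nlinarith [hsc]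
    have h2 : (1/t) / (cl * ((2:ℝ) ^ al) ^ j) = cl⁻¹ * q ^ j * (1/t) := by
      rw [hqdef, inv_pow]
      field_simp
    linarith [h1, h2.le, h2.ge]
  -- central ball estimate
  have hball : ∫⁻ z in closedBall y r, ENNReal.ofReal (p t (y - z) * f z) ∂volume
      ≤ ENNReal.ofReal D0 * M := by
    have h1 : ∫⁻ z in closedBall y r, ENNReal.ofReal (p t (y - z) * f z) ∂volume
        ≤ ENNReal.ofReal ((C * a ^ n) * (4 * r) ^ n * ωr) * M := by
      refine hkey _ _ _ (by positivity) (by positivity) measurableSet_closedBall ?_ ?_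
      · intro z hz
        have hz' : dist z y ≤ r := mem_closedBall.1 hz
        have : dist z x ≤ dist z y + dist y x := dist_triangle z y x
        exact mem_ball.2 (by linarith)
      · intro z hz hzy
        have hw : y - z ≠ 0 := sub_ne_zero_of_ne hzy.symm
        have hb := (hbound t ht (y - z) hw).2
        calc p t (y - z) ≤ C * min ((ψi (1/t)) ^ n) _ := hb
          _ ≤ C * (ψi (1/t)) ^ n := mul_le_mul_of_nonneg_left (min_le_left _ _) hC0.le
          _ = C * a ^ n := by rw [hadef]
    have h2 : (C * a ^ n) * (4 * r) ^ n * ωr = D0 := by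
      have har : a ^ n * r ^ n = 1 := by
        rw [hrdef, ← mul_pow, mul_inv_cancel₀ ha.ne', one_pow]
      rw [hD0def, mul_pow]
      linear_combination C * 4 ^ n * ωr * har
    rwa [h2] at h1
  -- annulus estimates
  have hann : ∀ j : ℕ,
      ∫⁻ z in closedBall y (2 ^ (j+1) * r) \ ball y (2 ^ j * r),
        ENNReal.ofReal (p t (y - z) * f z) ∂volume
      ≤ ENNReal.ofReal (K * q ^ j) * M := by
    intro j
    have h2j : (1:ℝ) ≤ 2 ^ j := one_le_pow₀ (by norm_num)
    have h2jpos : (0:ℝ) < 2 ^ j := by positivity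
    set cc : ℝ := C * cl⁻¹ * q ^ j / (2 ^ j * r) ^ n with hccdef
    have hccnn : 0 ≤ cc := by
      apply div_nonneg
      · positivity
      · exact pow_nonneg (by positivity) n
    have h1 : ∫⁻ z in closedBall y (2 ^ (j+1) * r) \ ball y (2 ^ j * r),
        ENNReal.ofReal (p t (y - z) * f z) ∂volume
        ≤ ENNReal.ofReal (cc * (2 ^ (j+3) * r) ^ n * ωr) * M := by
      refine hkey _ _ _ hccnn (by positivity)
        (measurableSet_closedBall.diff measurableSet_ball) ?_ ?_
      · intro z hz
        have hz1 : dist z y ≤ 2 ^ (j+1) * r := mem_closedBall.1 hz.1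
        have : dist z x ≤ dist z y + dist y x := dist_triangle z y x
        refine mem_ball.2 ?_
        have e1 : (2:ℝ) ^ (j+1) = 2 * 2 ^ j := by ring
        have e3 : (2:ℝ) ^ (j+3) = 8 * 2 ^ j := by ring
        nlinarith
      · intro z hz hzy
        have hlow : 2 ^ j * r ≤ ‖y - z‖ := by
          have h2 : ¬ dist z y < 2 ^ j * r := hz.2
          push_neg at h2
          rw [show ‖y - z‖ = dist z y by rw [dist_eq_norm, norm_sub_rev]]
          exact h2
        have hwpos : 0 < ‖y - z‖ := lt_of_lt_of_le (by positivity) hlow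
        have hw : y - z ≠ 0 := by
          intro h; rw [h, norm_zero] at hwpos; exact lt_irrefl _ hwpos
        have hb := (hbound t ht (y - z) hw).2
        have hinv : ‖y - z‖⁻¹ ≤ a / 2 ^ j := by
          have hh1 : ‖y - z‖⁻¹ ≤ (2 ^ j * r)⁻¹ := inv_anti₀ (by positivity) hlow
          have hh2 : ((2:ℝ) ^ j * r)⁻¹ = a / 2 ^ j := by
            rw [hrdef]; field_simp
          linarith
        have hψw : ψ (‖y - z‖⁻¹) ≤ ψ (a / 2 ^ j) := by
          rcases lt_or_eq_of_le hinv with hlt | heq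
          · exact (hψ_mono (Set.mem_Ioi.2 (inv_pos.2 hwpos))
              (Set.mem_Ioi.2 (by positivity)) hlt).le
          · rw [heq]
        have hnum : t * ψ (‖y - z‖⁻¹) ≤ cl⁻¹ * q ^ j := by
          have hψj := hψannulus j
          have : t * ψ (‖y - z‖⁻¹) ≤ t * (cl⁻¹ * q ^ j * (1/t)) :=
            mul_le_mul_of_nonneg_left (hψw.trans hψj) ht.le
          calc t * ψ (‖y - z‖⁻¹) ≤ t * (cl⁻¹ * q ^ j * (1/t)) := this
            _ = cl⁻¹ * q ^ j := by field_simp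
        have hden : ((2:ℝ) ^ j * r) ^ n ≤ ‖y - z‖ ^ n :=
          pow_le_pow_left₀ (by positivity) hlow n
        have hψpos : 0 < ψ (‖y - z‖⁻¹) := hψ_pos _ (inv_pos.2 hwpos)
        have hfrac : t * ψ (‖y - z‖⁻¹) / ‖y - z‖ ^ n ≤ cl⁻¹ * q ^ j / (2 ^ j * r) ^ n :=
          div_le_div₀ (by positivity) hnum (by positivity) hden
        calc p t (y - z) ≤ C * min ((ψi (1/t)) ^ n) (t * ψ (‖y - z‖⁻¹) / ‖y - z‖ ^ n) := hb
          _ ≤ C * (t * ψ (‖y - z‖⁻¹) / ‖y - z‖ ^ n) :=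
              mul_le_mul_of_nonneg_left (min_le_right _ _) hC0.le
          _ ≤ C * (cl⁻¹ * q ^ j / (2 ^ j * r) ^ n) :=
              mul_le_mul_of_nonneg_left hfrac hC0.le
          _ = cc := by rw [hccdef]; ring
    have h2 : cc * (2 ^ (j+3) * r) ^ n * ωr = K * q ^ j := by
      have hne : ((2:ℝ) ^ j * r) ^ n ≠ 0 := by positivity
      have h8 : ((2:ℝ) ^ (j+3) * r) ^ n = (2 ^ j * r) ^ n * 8 ^ n := by
        rw [← mul_pow]
        congr 1
        ring
      rw [hccdef, hKdef, h8]
      field_simp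
    rwa [h2] at h1
  -- cover and sum
  have hcover : (Set.univ : Set (EuclideanSpace ℝ (Fin n)))
      ⊆ closedBall y r ∪ ⋃ j, (closedBall y (2 ^ (j+1) * r) \ ball y (2 ^ j * r)) := by
    intro z _
    by_cases h0 : dist z y ≤ r
    · exact Or.inl (mem_closedBall.2 h0)
    · push_neg at h0
      have hex : ∃ k : ℕ, dist z y ≤ 2 ^ k * r := by
        obtain ⟨k, hk⟩ := pow_unbounded_of_one_lt (dist z y / r) (by norm_num : (1:ℝ) < 2)
        exact ⟨k, le_of_lt (by rwa [div_lt_iff₀ hr] at hk)⟩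
      have hKne : Nat.find hex ≠ 0 := by
        intro h
        have := Nat.find_spec hex
        rw [h] at this
        simp only [pow_zero, one_mul] at this
        linarith
      obtain ⟨m, hm⟩ := Nat.exists_eq_succ_of_ne_zero hKne
      have hspec : dist z y ≤ 2 ^ (Nat.find hex) * r := Nat.find_spec hex
      have hmin : ¬ dist z y ≤ 2 ^ m * r := Nat.find_min hex (by omega)
      push_neg at hmin
      refine Or.inr (Set.mem_iUnion.2 ⟨m, ?_⟩)
      constructor
      · rw [hm] at hspec; exact mem_closedBall.2 hspec
      · intro hmem
        exact absurd (mem_ball.1 hmem) (not_lt.2 hmin.le)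
  calc ∫⁻ z, ENNReal.ofReal (p t (y - z) * f z) ∂volume
      = ∫⁻ z in (Set.univ : Set (EuclideanSpace ℝ (Fin n))),
          ENNReal.ofReal (p t (y - z) * f z) ∂volume := by rw [setLIntegral_univ]
    _ ≤ ∫⁻ z in closedBall y r ∪ ⋃ j, (closedBall y (2 ^ (j+1) * r) \ ball y (2 ^ j * r)),
          ENNReal.ofReal (p t (y - z) * f z) ∂volume := lintegral_mono_set hcover
    _ ≤ (∫⁻ z in closedBall y r, ENNReal.ofReal (p t (y - z) * f z) ∂volume)
        + ∫⁻ z in ⋃ j, (closedBall y (2 ^ (j+1) * r) \ ball y (2 ^ j * r)),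
            ENNReal.ofReal (p t (y - z) * f z) ∂volume := lintegral_union_le _ _ _
    _ ≤ ENNReal.ofReal D0 * M
        + ∑' j : ℕ, ∫⁻ z in closedBall y (2 ^ (j+1) * r) \ ball y (2 ^ j * r),
            ENNReal.ofReal (p t (y - z) * f z) ∂volume :=
        add_le_add hball (lintegral_iUnion_le _ _)
    _ ≤ ENNReal.ofReal D0 * M + ∑' j : ℕ, ENNReal.ofReal (K * q ^ j) * M :=
        add_le_add le_rfl (ENNReal.tsum_le_tsum hann)
    _ = ENNReal.ofReal D0 * M + (∑' j : ℕ, ENNReal.ofReal (K * q ^ j)) * M := by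
        rw [ENNReal.tsum_mul_right]
    _ = ENNReal.ofReal D0 * M + ENNReal.ofReal (K * (1 - q)⁻¹) * M := by
        congr 1
        have hgeom : ∑' j : ℕ, ENNReal.ofReal (K * q ^ j)
            = ENNReal.ofReal K * (1 - ENNReal.ofReal q)⁻¹ := by
          have : ∀ j : ℕ, ENNReal.ofReal (K * q ^ j)
              = ENNReal.ofReal K * (ENNReal.ofReal q) ^ j := by
            intro j
            rw [ENNReal.ofReal_mul hKpos.le, ENNReal.ofReal_pow hq0.le]
          rw [tsum_congr this, ENNReal.tsum_mul_left, ENNReal.tsum_geometric]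
        rw [hgeom]
        have h1q : (1 : ℝ≥0∞) - ENNReal.ofReal q = ENNReal.ofReal (1 - q) := by
          rw [ENNReal.ofReal_sub 1 hq0.le, ENNReal.ofReal_one]
        rw [h1q, ← ENNReal.ofReal_inv_of_pos (by linarith), ← ENNReal.ofReal_mul hKpos.le]
    _ = ENNReal.ofReal (D0 + K * (1 - q)⁻¹) * M := by
        rw [ENNReal.ofReal_add hD0pos.le
          (mul_nonneg hKpos.le (inv_nonneg.2 (by linarith))), add_mul]
end

section
/- Let n ≥ 1, let ψ be a weak-scaling function as in the context, and let (p_t)_{t>0} satisfy the two-sided bound in the context with constant C; assume in addition that ∫_{ℝⁿ} p_t(x) dx = 1 for every t > 0. Define the parabolic cone Γᵖ(x) = {(y,t) ∈ ℝⁿ × (0,∞) : |x−y| ≤ φ(t)}. Then for every f ∈ L¹(ℝⁿ), for almost every x ∈ ℝⁿ, the non-tangential limit holds: ∫_{ℝⁿ} p_t(y−z) f(z) dz → f(x) as t → 0 with (y,t) ∈ Γᵖ(x). -/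
open MeasureTheory Metric ENNReal

set_option maxHeartbeats 1000000

private theorem stmt6_dyadic (a d : ℝ) (ha : 0 < a) (h : a ≤ d) :
    ∃ k : ℕ, 2 ^ k * a ≤ d ∧ d ≤ 2 ^ (k+1) * a := by
  have h2 : (1:ℝ) < 2 := one_lt_two
  obtain ⟨m, hm⟩ := pow_unbounded_of_one_lt (d / a) h2
  have hP : ∃ m, d ≤ 2 ^ m * a := ⟨m, by rw [← div_le_iff₀ ha]; exact hm.le⟩
  classical
  have hspec := Nat.find_spec hP
  cases hk : Nat.find hP with
  | zero =>
      rw [hk] at hspec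
      refine ⟨0, by simpa using h, ?_⟩
      norm_num at hspec ⊢
      linarith
  | succ m =>
      rw [hk] at hspec
      have hm' : ¬ d ≤ 2 ^ m * a := Nat.find_min hP (by omega)
      exact ⟨m, le_of_not_ge hm', hspec⟩

private theorem stmt6_geom (c q : ℝ) (hc : 0 ≤ c) (hq0 : 0 ≤ q) (hq1 : q < 1) :
    ∑' k : ℕ, ENNReal.ofReal (c * q ^ k) ≤ ENNReal.ofReal (c * (1 - q)⁻¹) := by
  have h1 : ∀ k : ℕ, ENNReal.ofReal (c * q ^ k) = ENNReal.ofReal c * (ENNReal.ofReal q) ^ k := by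
    intro k
    rw [ENNReal.ofReal_mul hc, ENNReal.ofReal_pow hq0]
  rw [tsum_congr h1, ENNReal.tsum_mul_left, ENNReal.tsum_geometric]
  have h2 : (1 : ℝ≥0∞) - ENNReal.ofReal q = ENNReal.ofReal (1 - q) := by
    rw [ENNReal.ofReal_sub 1 hq0, ENNReal.ofReal_one]
  rw [h2, ← ENNReal.ofReal_inv_of_pos (by linarith), ← ENNReal.ofReal_mul hc]


/-- Non-tangential almost-everywhere convergence for weak-scaling
nonlocal heat kernels: for `f ∈ L¹(ℝⁿ)`, for a.e. `x`, `∫ p_t(y−z) f(z) dz → f(x)`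
as `t → 0` with `(y,t)` in the parabolic cone `Γᵖ(x) = {(y,t) : |x−y| ≤ φ(t)}`,
`φ(t) = 1/ψ⁻(1/t)`. -/
theorem stmt_6 (n : ℕ) (hn : 1 ≤ n)
    (ψ ψi : ℝ → ℝ)
    (hψ_pos : ∀ θ : ℝ, 0 < θ → 0 < ψ θ)
    (hψ_cont : ContinuousOn ψ (Set.Ioi 0))
    (hψ_mono : StrictMonoOn ψ (Set.Ioi 0))
    (hψi_pos : ∀ s : ℝ, 0 < s → 0 < ψi s)
    (hψi_right : ∀ s : ℝ, 0 < s → ψ (ψi s) = s)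
    (hψi_left : ∀ θ : ℝ, 0 < θ → ψi (ψ θ) = θ)
    (al ab cl Cb : ℝ)
    (hal : 0 < al) (halab : al ≤ ab) (hab : ab < 2)
    (hcl : 0 < cl) (hcl1 : cl ≤ 1) (hCb : 1 ≤ Cb)
    (hscale : ∀ lam θ : ℝ, 1 ≤ lam → 0 < θ →
      cl * lam ^ al * ψ θ ≤ ψ (lam * θ) ∧ ψ (lam * θ) ≤ Cb * lam ^ ab * ψ θ)
    (p : ℝ → EuclideanSpace ℝ (Fin n) → ℝ)
    (hp_nonneg : ∀ t : ℝ, 0 < t → ∀ x, 0 ≤ p t x)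
    (hp_meas : ∀ t : ℝ, 0 < t → Measurable (p t))
    (C : ℝ) (hC : 1 ≤ C)
    (hbound : ∀ t : ℝ, 0 < t → ∀ x : EuclideanSpace ℝ (Fin n), x ≠ 0 →
      C⁻¹ * min ((ψi (1 / t)) ^ n) (t * ψ (‖x‖⁻¹) / ‖x‖ ^ n) ≤ p t x ∧
      p t x ≤ C * min ((ψi (1 / t)) ^ n) (t * ψ (‖x‖⁻¹) / ‖x‖ ^ n))
    (hp_cons : ∀ t : ℝ, 0 < t → ∫⁻ x, ENNReal.ofReal (p t x) ∂volume = 1) :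
    ∀ f : EuclideanSpace ℝ (Fin n) → ℝ, Integrable f volume →
      ∀ᵐ x ∂(volume : Measure (EuclideanSpace ℝ (Fin n))),
        ∀ ε : ℝ, 0 < ε → ∃ δ : ℝ, 0 < δ ∧ ∀ t : ℝ, 0 < t → t < δ →
          ∀ y : EuclideanSpace ℝ (Fin n), ‖x - y‖ ≤ (ψi (1 / t))⁻¹ →
            |(∫ z, p t (y - z) * f z ∂volume) - f x| < ε := by
  intro f hf
  haveI : Nonempty (Fin n) := ⟨⟨0, hn⟩⟩
  -- basic ψ facts
  have hψmono : ∀ a b : ℝ, 0 < a → a ≤ b → ψ a ≤ ψ b := fun a b ha hab =>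
    hψ_mono.monotoneOn (Set.mem_Ioi.2 ha) (Set.mem_Ioi.2 (lt_of_lt_of_le ha hab)) hab
  -- scaling constants
  set Q : ℝ := (2:ℝ) ^ al with hQdef
  have hQ1 : 1 < Q := Real.one_lt_rpow_iff_of_pos (by norm_num) |>.2 (Or.inl ⟨by norm_num, hal⟩)
  set q : ℝ := Q⁻¹ with hqdef
  have hq0 : 0 < q := by rw [hqdef]; positivity
  have hq1 : q < 1 := by rw [hqdef]; exact inv_lt_one_of_one_lt₀ hQ1
  have hψdiv : ∀ θ : ℝ, 0 < θ → ∀ k : ℕ, ψ (θ / 2 ^ k) ≤ ψ θ * (cl⁻¹ * q ^ k) := by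
    intro θ hθ k
    have hpow : ((2:ℝ) ^ k) ^ al = Q ^ k := by
      rw [hQdef, ← Real.rpow_natCast ((2:ℝ) ^ al) k, ← Real.rpow_natCast (2:ℝ) k,
        ← Real.rpow_mul (by norm_num), ← Real.rpow_mul (by norm_num), mul_comm]
    have h2k : (1:ℝ) ≤ 2 ^ k := one_le_pow₀ (by norm_num)
    have h1 := (hscale (2 ^ k) (θ / 2 ^ k) h2k (by positivity)).1
    have heq : (2:ℝ) ^ k * (θ / 2 ^ k) = θ := by field_simp
    rw [heq, hpow] at h1
    have hQk : (0:ℝ) < Q ^ k := by positivity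
    have h3 : ψ (θ / 2 ^ k) ≤ ψ θ / (cl * Q ^ k) := by
      rw [le_div_iff₀ (by positivity), mul_comm]
      exact h1
    refine h3.trans (le_of_eq ?_)
    rw [hqdef, inv_pow, div_eq_mul_inv, mul_inv]
  -- kernel bounds
  have hK1 : ∀ t : ℝ, 0 < t → ∀ w : EuclideanSpace ℝ (Fin n), w ≠ 0 → p t w ≤ C * (ψi (1/t)) ^ n := by
    intro t ht w hw
    exact le_trans (hbound t ht w hw).2
      (mul_le_mul_of_nonneg_left (min_le_left _ _) (by linarith))
  have hK2 : ∀ t : ℝ, 0 < t → ∀ r : ℝ, 0 < r → ∀ w : EuclideanSpace ℝ (Fin n), r ≤ ‖w‖ →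
      p t w ≤ C * (t * ψ r⁻¹ / r ^ n) := by
    intro t ht r hr w hrw
    have hw0 : (0:ℝ) < ‖w‖ := lt_of_lt_of_le hr hrw
    have hwne : w ≠ 0 := norm_pos_iff.1 hw0
    refine le_trans (hbound t ht w hwne).2
      (mul_le_mul_of_nonneg_left (le_trans (min_le_right _ _) ?_) (by linarith))
    have h1 : ψ (‖w‖⁻¹) ≤ ψ r⁻¹ := hψmono _ _ (by positivity) (by
      exact inv_anti₀ hr hrw)
    have h2 : (r:ℝ) ^ n ≤ ‖w‖ ^ n := pow_le_pow_left₀ hr.le hrw n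
    have hψr : 0 < ψ r⁻¹ := hψ_pos _ (by positivity)
    exact div_le_div₀ (by positivity) (mul_le_mul_of_nonneg_left h1 ht.le) (by positivity) h2
  -- volume facts
  set ν : ℝ≥0∞ := volume (ball (0 : EuclideanSpace ℝ (Fin n)) 1) with hνdef
  have hνfin : ν ≠ ⊤ := measure_ball_lt_top.ne
  set v : ℝ := ν.toReal with hvdef
  have hv0 : 0 < v := ENNReal.toReal_pos (measure_ball_pos volume 0 one_pos).ne' hνfin
  have hball : ∀ (c : EuclideanSpace ℝ (Fin n)) (r : ℝ), 0 ≤ r →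
      volume (closedBall c r) = ENNReal.ofReal (r ^ n * v) := by
    intro c r hr
    have h := Measure.addHaar_closedBall (μ := (volume : Measure (EuclideanSpace ℝ (Fin n)))) c hr
    rw [finrank_euclideanSpace_fin] at h
    rw [h, ← hνdef, hvdef, ENNReal.ofReal_mul (by positivity),
      ENNReal.ofReal_toReal hνfin]
  -- Lebesgue differentiation
  filter_upwards [(Besicovitch.vitaliFamily (volume : Measure (EuclideanSpace ℝ (Fin n)))).ae_tendsto_average_norm_sub
    hf.locallyIntegrable] with x hx0
  have hx : Filter.Tendsto (fun r => ⨍ z in closedBall x r, ‖f z - f x‖ ∂volume)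
      (nhdsWithin 0 (Set.Ioi 0)) (nhds 0) := by
    have h := hx0.comp (Besicovitch.tendsto_filterAt volume x)
    exact h
  intro ε hε
  -- constants
  set S : ℝ := (1 - q)⁻¹ with hSdef
  have hS0 : 0 < S := by rw [hSdef]; exact inv_pos.2 (by linarith)
  set D : ℝ := C * 2 ^ n * v + C * cl⁻¹ * v * 2 ^ (2*n) * S with hDdef
  have hC0 : (0:ℝ) < C := by linarith
  have hD0 : 0 < D := by
    rw [hDdef]
    exact add_pos (mul_pos (mul_pos hC0 (by positivity)) hv0)
      (mul_pos (mul_pos (mul_pos (mul_pos hC0 (inv_pos.2 hcl)) hv0) (by positivity)) hS0)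
  set ε' : ℝ := ε / (2 * (D + 1)) with hε'def
  have hε'0 : 0 < ε' := by rw [hε'def]; positivity
  -- Lebesgue point radius
  have hev : ∀ᶠ r in nhdsWithin 0 (Set.Ioi 0),
      (⨍ z in closedBall x r, ‖f z - f x‖ ∂volume) < ε' := hx.eventually (gt_mem_nhds hε'0)
  obtain ⟨r₀, hr₀pos, hr₀sub⟩ := mem_nhdsGT_iff_exists_Ioc_subset.1 hev
  rw [Set.mem_Ioi] at hr₀pos
  have hLeb : ∀ r : ℝ, 0 < r → r ≤ r₀ →
      ∫⁻ z in closedBall x r, ENNReal.ofReal ‖f z - f x‖ ∂volume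
        ≤ ENNReal.ofReal (ε' * (r ^ n * v)) := by
    intro r hr hrr
    have havg : (⨍ z in closedBall x r, ‖f z - f x‖ ∂volume) < ε' := hr₀sub ⟨hr, hrr⟩
    have hgint : IntegrableOn (fun z => ‖f z - f x‖) (closedBall x r) volume :=
      (hf.integrableOn.sub (integrableOn_const measure_closedBall_lt_top.ne)).norm
    have hμ : volume (closedBall x r) = ENNReal.ofReal (r ^ n * v) := hball x r hr.le
    have hrv : (0:ℝ) < r ^ n * v := by positivity
    have h3 : (⨍ z in closedBall x r, ‖f z - f x‖ ∂volume)
        = (r ^ n * v)⁻¹ * ∫ z in closedBall x r, ‖f z - f x‖ ∂volume := by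
      rw [setAverage_eq, measureReal_def, hμ, ENNReal.toReal_ofReal hrv.le, smul_eq_mul]
    rw [h3] at havg
    have h4 : ∫ z in closedBall x r, ‖f z - f x‖ ∂volume ≤ ε' * (r ^ n * v) := by
      rw [inv_mul_lt_iff₀ hrv] at havg
      rw [mul_comm] at havg
      exact havg.le
    rw [← ofReal_integral_eq_lintegral_ofReal hgint
      (Filter.Eventually.of_forall fun z => norm_nonneg _)]
    exact ENNReal.ofReal_le_ofReal h4
  -- L¹ norm
  set L : ℝ := ∫ z, ‖f z‖ ∂volume with hLdef
  have hL0 : 0 ≤ L := by rw [hLdef]; exact integral_nonneg fun z => norm_nonneg _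
  have hLlin : ∫⁻ z, ENNReal.ofReal ‖f z‖ ∂volume = ENNReal.ofReal L :=
    (ofReal_integral_eq_lintegral_ofReal hf.norm
      (Filter.Eventually.of_forall fun z => norm_nonneg _)).symm
  -- far-region constants
  set ρ : ℝ := r₀ / 2 with hρdef
  have hρ0 : 0 < ρ := by rw [hρdef]; positivity
  have hψρ : 0 < ψ ρ⁻¹ := hψ_pos _ (by positivity)
  clear_value ρ
  set K1 : ℝ := C * cl⁻¹ * v * 2 ^ n * S with hK1def
  have hK10 : 0 < K1 := by
    rw [hK1def]
    exact mul_pos (mul_pos (mul_pos (mul_pos hC0 (inv_pos.2 hcl)) hv0) (by positivity)) hS0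
  set Kx : ℝ := C * ψ ρ⁻¹ / ρ ^ n * L + ‖f x‖ * (K1 * ψ ρ⁻¹) with hKxdef
  have hKx0 : 0 ≤ Kx := by
    rw [hKxdef]
    have h1 : (0:ℝ) ≤ C * ψ ρ⁻¹ / ρ ^ n * L :=
      mul_nonneg (div_nonneg (mul_nonneg (by linarith) hψρ.le) (by positivity)) hL0
    have h2 : (0:ℝ) ≤ ‖f x‖ * (K1 * ψ ρ⁻¹) :=
      mul_nonneg (norm_nonneg _) (mul_nonneg hK10.le hψρ.le)
    linarith
  -- choice of δ
  have h4r : (0:ℝ) < 4 / r₀ := by positivity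
  have hψ4 : 0 < ψ (4 / r₀) := hψ_pos _ h4r
  set δ1 : ℝ := (ψ (4 / r₀))⁻¹ with hδ1def
  have hδ10 : 0 < δ1 := by rw [hδ1def]; positivity
  set δ2 : ℝ := ε / (2 * (Kx + 1)) with hδ2def
  have hδ20 : 0 < δ2 := by rw [hδ2def]; positivity
  refine ⟨min δ1 δ2, lt_min hδ10 hδ20, ?_⟩
  intro t ht htδ y hy
  have htδ1 : t < δ1 := lt_of_lt_of_le htδ (min_le_left _ _)
  have htδ2 : t < δ2 := lt_of_lt_of_le htδ (min_le_right _ _)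
  have h1t : (0:ℝ) < 1 / t := by positivity
  set φ : ℝ := (ψi (1 / t))⁻¹ with hφdef
  have hφ0 : 0 < φ := by rw [hφdef]; exact inv_pos.2 (hψi_pos _ h1t)
  have hφinv : φ⁻¹ = ψi (1 / t) := by rw [hφdef, inv_inv]
  have hψφ : ψ φ⁻¹ = 1 / t := by rw [hφinv]; exact hψi_right _ h1t
  have hy' : ‖x - y‖ ≤ φ := hy
  -- φ is small
  have hφr₀ : 4 * φ ≤ r₀ := by
    have hlt : ψ (4 / r₀) < 1 / t := by
      rw [lt_div_iff₀ ht]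
      calc ψ (4 / r₀) * t < ψ (4 / r₀) * δ1 := by
            exact mul_lt_mul_of_pos_left htδ1 hψ4
        _ = 1 := by rw [hδ1def, mul_inv_cancel₀ hψ4.ne']
    have h2 : 4 / r₀ ≤ ψi (1 / t) := by
      by_contra hcon
      push_neg at hcon
      have h5 := hψ_mono (Set.mem_Ioi.2 (hψi_pos _ h1t)) (Set.mem_Ioi.2 h4r) hcon
      rw [hψi_right _ h1t] at h5
      linarith
    have h6 : φ ≤ r₀ / 4 := by
      rw [hφdef, show r₀ / 4 = (4 / r₀)⁻¹ by rw [inv_div]]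
      exact inv_anti₀ h4r h2
    linarith
  -- kernel as function of z
  have hpm : Measurable fun z : EuclideanSpace ℝ (Fin n) => p t (y - z) :=
    (hp_meas t ht).comp (measurable_const.sub measurable_id)
  have hmaplint : ∀ F : EuclideanSpace ℝ (Fin n) → ℝ≥0∞,
      ∫⁻ z, F (y - z) ∂volume = ∫⁻ w, F w ∂volume := by
    intro F
    calc ∫⁻ z, F (y - z) ∂volume
        = ∫⁻ w, F w ∂(Measure.map (MeasurableEquiv.subLeft y) volume) :=
          (lintegral_map_equiv F (MeasurableEquiv.subLeft y)).symm
      _ = ∫⁻ w, F w ∂volume := by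
          rw [show Measure.map (MeasurableEquiv.subLeft y)
              (volume : Measure (EuclideanSpace ℝ (Fin n))) = volume from
            Measure.map_sub_left_eq_self volume y]
  have hmass1 : ∫⁻ z, ENNReal.ofReal (p t (y - z)) ∂volume = 1 := by
    rw [hmaplint (fun w => ENNReal.ofReal (p t w))]
    exact hp_cons t ht
  have hpt_int : Integrable (fun z => p t (y - z)) volume := by
    refine ⟨hpm.aestronglyMeasurable, ?_⟩
    rw [hasFiniteIntegral_iff_ofReal
      (Filter.Eventually.of_forall fun z => hp_nonneg t ht _)]
    rw [hmass1]
    exact one_lt_top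
  have hmassR : ∫ z, p t (y - z) ∂volume = 1 := by
    rw [integral_eq_lintegral_of_nonneg_ae
      (Filter.Eventually.of_forall fun z => hp_nonneg t ht _) hpm.aestronglyMeasurable,
      hmass1]
    simp
  -- a.e. bound by sup of kernel
  set M : ℝ := C * φ⁻¹ ^ n with hMdef
  have hM0 : 0 ≤ M := by
    rw [hMdef]; positivity
  have haey : ∀ᵐ z ∂(volume : Measure (EuclideanSpace ℝ (Fin n))), z ≠ y := by
    rw [ae_iff]
    have : {z : EuclideanSpace ℝ (Fin n) | ¬ z ≠ y} = {y} := by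
      ext z; simp
    rw [this]
    exact measure_singleton y
  have hpb : ∀ᵐ z ∂(volume : Measure (EuclideanSpace ℝ (Fin n))), p t (y - z) ≤ M := by
    filter_upwards [haey] with z hz
    have h := hK1 t ht (y - z) (sub_ne_zero.2 (Ne.symm hz))
    rw [← hφinv] at h
    rw [hMdef]
    exact h
  have hpf_int : Integrable (fun z => p t (y - z) * f z) volume := by
    refine Integrable.mono' (hf.norm.const_mul M)
      (hpm.aestronglyMeasurable.mul hf.aestronglyMeasurable) ?_
    filter_upwards [hpb] with z hz
    rw [norm_mul]
    exact mul_le_mul_of_nonneg_right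
      (by rwa [Real.norm_of_nonneg (hp_nonneg t ht _)]) (norm_nonneg _)
  -- reduce to integral of p * ‖f - f x‖
  have hdiff : (∫ z, p t (y - z) * f z ∂volume) - f x
      = ∫ z, p t (y - z) * (f z - f x) ∂volume := by
    have h1 : ∫ z, p t (y - z) * (f z - f x) ∂volume
        = (∫ z, p t (y - z) * f z ∂volume) - ∫ z, p t (y - z) * f x ∂volume := by
      simp_rw [mul_sub]
      exact integral_sub hpf_int (hpt_int.mul_const (f x))
    rw [h1, integral_mul_const, hmassR, one_mul]
  have habs : |(∫ z, p t (y - z) * f z ∂volume) - f x|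
      ≤ ∫ z, p t (y - z) * ‖f z - f x‖ ∂volume := by
    rw [hdiff]
    have h2 := norm_integral_le_integral_norm (fun z => p t (y - z) * (f z - f x)) (μ := volume)
    have h3 : ∫ z, ‖p t (y - z) * (f z - f x)‖ ∂volume
        = ∫ z, p t (y - z) * ‖f z - f x‖ ∂volume := by
      refine integral_congr_ae (Filter.Eventually.of_forall fun z => ?_)
      show ‖p t (y - z) * (f z - f x)‖ = p t (y - z) * ‖f z - f x‖
      rw [norm_mul, Real.norm_of_nonneg (hp_nonneg t ht _)]
    rw [h3] at h2
    exact h2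
  have hInt_eq : ∫ z, p t (y - z) * ‖f z - f x‖ ∂volume
      = (∫⁻ z, ENNReal.ofReal (p t (y - z) * ‖f z - f x‖) ∂volume).toReal :=
    integral_eq_lintegral_of_nonneg_ae
      (Filter.Eventually.of_forall fun z => mul_nonneg (hp_nonneg t ht _) (norm_nonneg _))
      (hpm.aestronglyMeasurable.mul
        ((hf.aestronglyMeasurable.sub aestronglyMeasurable_const).norm))
  set G : EuclideanSpace ℝ (Fin n) → ℝ≥0∞ :=
    fun z => ENNReal.ofReal (p t (y - z) * ‖f z - f x‖) with hGdef
  -- region splitting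
  set s1 : Set (EuclideanSpace ℝ (Fin n)) := closedBall x (2*φ) with hs1def
  set s2 : Set (EuclideanSpace ℝ (Fin n)) := closedBall x r₀ with hs2def
  have hsplit : ∫⁻ z, G z ∂volume
      ≤ (∫⁻ z in s1, G z ∂volume)
        + ((∫⁻ z in s2 \ s1, G z ∂volume) + ∫⁻ z in s2ᶜ, G z ∂volume) := by
    have hcover : (Set.univ : Set (EuclideanSpace ℝ (Fin n)))
        ⊆ s1 ∪ ((s2 \ s1) ∪ s2ᶜ) := by
      intro z _
      by_cases h1 : z ∈ s1
      · exact Or.inl h1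
      by_cases h2 : z ∈ s2
      · exact Or.inr (Or.inl ⟨h2, h1⟩)
      · exact Or.inr (Or.inr h2)
    calc ∫⁻ z, G z ∂volume = ∫⁻ z in Set.univ, G z ∂volume := by
          rw [Measure.restrict_univ]
      _ ≤ ∫⁻ z in s1 ∪ ((s2 \ s1) ∪ s2ᶜ), G z ∂volume := lintegral_mono_set hcover
      _ ≤ (∫⁻ z in s1, G z ∂volume) + ∫⁻ z in (s2 \ s1) ∪ s2ᶜ, G z ∂volume :=
          lintegral_union_le _ _ _
      _ ≤ _ := add_le_add le_rfl (lintegral_union_le _ _ _)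
  -- near region
  have hnear : ∫⁻ z in s1, G z ∂volume ≤ ENNReal.ofReal (ε' * (C * 2 ^ n * v)) := by
    have hb : ∀ᵐ z ∂(volume.restrict s1),
        G z ≤ ENNReal.ofReal M * ENNReal.ofReal ‖f z - f x‖ := by
      filter_upwards [ae_restrict_of_ae hpb] with z hz
      show ENNReal.ofReal (p t (y - z) * ‖f z - f x‖) ≤ _
      rw [← ENNReal.ofReal_mul hM0]
      exact ENNReal.ofReal_le_ofReal (mul_le_mul_of_nonneg_right hz (norm_nonneg _))
    calc ∫⁻ z in s1, G z ∂volume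
        ≤ ∫⁻ z in s1, ENNReal.ofReal M * ENNReal.ofReal ‖f z - f x‖ ∂volume :=
          lintegral_mono_ae hb
      _ = ENNReal.ofReal M * ∫⁻ z in s1, ENNReal.ofReal ‖f z - f x‖ ∂volume :=
          lintegral_const_mul' _ _ ENNReal.ofReal_ne_top
      _ ≤ ENNReal.ofReal M * ENNReal.ofReal (ε' * ((2*φ)^n * v)) := by
          refine mul_le_mul_right ?_ _
          rw [hs1def]
          exact hLeb (2*φ) (by positivity) (by linarith)
      _ = ENNReal.ofReal (M * (ε' * ((2*φ)^n * v))) := (ENNReal.ofReal_mul hM0).symm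
      _ ≤ ENNReal.ofReal (ε' * (C * 2 ^ n * v)) := by
          apply ENNReal.ofReal_le_ofReal
          apply le_of_eq
          rw [hMdef, mul_pow]
          have hφn : φ ^ n ≠ 0 := pow_ne_zero _ hφ0.ne'
          field_simp
          ring_nf
          rw [← mul_pow, mul_inv_cancel₀ hφ0.ne', one_pow]
  -- middle region
  have hmid : ∫⁻ z in s2 \ s1, G z ∂volume
      ≤ ENNReal.ofReal (ε' * (C * cl⁻¹ * v * 2 ^ (2*n) * S)) := by
    have hcst0 : (0:ℝ) ≤ ε' * (C * cl⁻¹ * v * 2 ^ (2*n)) :=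
      mul_nonneg hε'0.le (mul_nonneg (mul_nonneg (mul_nonneg hC0.le
        (inv_nonneg.2 hcl.le)) hv0.le) (by positivity))
    set A : ℕ → Set (EuclideanSpace ℝ (Fin n)) := fun k =>
      closedBall x (min (2^(k+2) * φ) r₀) \ ball x (2^(k+1) * φ) with hAdef
    have hsub : s2 \ s1 ⊆ ⋃ k, A k := by
      intro z hz
      have hd1 : dist z x ≤ r₀ := mem_closedBall.1 hz.1
      have hd2 : ¬ dist z x ≤ 2*φ := fun h => hz.2 (mem_closedBall.2 h)
      push_neg at hd2
      obtain ⟨k, hk1, hk2⟩ := stmt6_dyadic (2*φ) (dist z x) (by positivity) hd2.le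
      refine Set.mem_iUnion.2 ⟨k, ⟨?_, ?_⟩⟩
      · rw [mem_closedBall]
        refine le_min ?_ hd1
        calc dist z x ≤ 2^(k+1) * (2*φ) := hk2
          _ = 2^(k+2) * φ := by ring
      · intro hin
        rw [mem_ball] at hin
        have he : (2:ℝ)^k * (2*φ) = 2^(k+1)*φ := by ring
        rw [he] at hk1
        linarith
    have hterm : ∀ k : ℕ, ∫⁻ z in A k, G z ∂volume
        ≤ ENNReal.ofReal ((ε' * (C * cl⁻¹ * v * 2^(2*n))) * q ^ k) := by
      intro k
      have hrk : (0:ℝ) < 2^k * φ := by positivity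
      have hmin0 : (0:ℝ) < min (2^(k+2) * φ) r₀ := lt_min (by positivity) hr₀pos
      have hbk0 : (0:ℝ) ≤ C * (t * ψ (2^k*φ)⁻¹ / (2^k*φ)^n) := by
        have := hψ_pos ((2:ℝ)^k*φ)⁻¹ (by positivity)
        exact mul_nonneg hC0.le (div_nonneg (mul_nonneg ht.le this.le) (by positivity))
      have hker : ∀ z ∈ A k, p t (y - z) ≤ C * (t * ψ (2^k*φ)⁻¹ / (2^k*φ)^n) := by
        intro z hz
        apply hK2 t ht _ hrk
        have hz2 : 2^(k+1)*φ ≤ dist z x := by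
          by_contra hcon
          push_neg at hcon
          exact hz.2 (mem_ball.2 hcon)
        have htri : dist z x ≤ dist z y + dist y x := dist_triangle z y x
        have hy'' : dist y x ≤ φ := by
          rw [dist_comm, dist_eq_norm]; exact hy'
        have h2k1 : φ ≤ 2^k * φ := le_mul_of_one_le_left hφ0.le (one_le_pow₀ one_le_two)
        have hz2' : 2*(2^k*φ) ≤ dist z x := by
          calc 2*(2^k*φ) = 2^(k+1)*φ := by ring
            _ ≤ dist z x := hz2
        rw [show ‖y - z‖ = dist z y from by rw [dist_comm, dist_eq_norm]]
        linarith
      have hAmeas : MeasurableSet (A k) := measurableSet_closedBall.diff measurableSet_ball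
      have hψk : ψ ((2^k*φ)⁻¹) ≤ (1/t) * (cl⁻¹ * q^k) := by
        have h := hψdiv φ⁻¹ (by positivity) k
        rw [hψφ] at h
        have heq : φ⁻¹ / 2^k = (2^k*φ)⁻¹ := by
          rw [mul_inv, div_eq_mul_inv, mul_comm]
        rw [heq] at h
        exact h
      calc ∫⁻ z in A k, G z ∂volume
          ≤ ∫⁻ z in A k, ENNReal.ofReal (C * (t * ψ (2^k*φ)⁻¹ / (2^k*φ)^n))
              * ENNReal.ofReal ‖f z - f x‖ ∂volume := by
            refine lintegral_mono_ae ?_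
            filter_upwards [ae_restrict_mem hAmeas] with z hz
            show ENNReal.ofReal (p t (y - z) * ‖f z - f x‖) ≤ _
            rw [← ENNReal.ofReal_mul hbk0]
            exact ENNReal.ofReal_le_ofReal
              (mul_le_mul_of_nonneg_right (hker z hz) (norm_nonneg _))
        _ = ENNReal.ofReal (C * (t * ψ (2^k*φ)⁻¹ / (2^k*φ)^n))
              * ∫⁻ z in A k, ENNReal.ofReal ‖f z - f x‖ ∂volume :=
            lintegral_const_mul' _ _ ENNReal.ofReal_ne_top
        _ ≤ ENNReal.ofReal (C * (t * ψ (2^k*φ)⁻¹ / (2^k*φ)^n))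
              * ENNReal.ofReal (ε' * ((min (2^(k+2)*φ) r₀)^n * v)) := by
            refine mul_le_mul_right ?_ _
            refine le_trans (lintegral_mono_set ?_) (hLeb _ hmin0 (min_le_right _ _))
            exact Set.diff_subset
        _ = ENNReal.ofReal ((C * (t * ψ (2^k*φ)⁻¹ / (2^k*φ)^n))
              * (ε' * ((min (2^(k+2)*φ) r₀)^n * v))) := (ENNReal.ofReal_mul hbk0).symm
        _ ≤ ENNReal.ofReal ((ε' * (C * cl⁻¹ * v * 2^(2*n))) * q ^ k) := by
            apply ENNReal.ofReal_le_ofReal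
            have hminpow : (min (2^(k+2)*φ) r₀)^n ≤ (2^(k+2)*φ)^n :=
              pow_le_pow_left₀ hmin0.le (min_le_left _ _) n
            have hstep1 : C * (t * ψ (2^k*φ)⁻¹ / (2^k*φ)^n)
                * (ε' * ((min (2^(k+2)*φ) r₀)^n * v))
                ≤ C * (t * ((1/t) * (cl⁻¹ * q^k)) / (2^k*φ)^n)
                * (ε' * ((2^(k+2)*φ)^n * v)) := by
              refine mul_le_mul ?_ ?_ ?_ ?_
              · refine mul_le_mul_of_nonneg_left ?_ hC0.le
                have hnum : t * ψ (2^k*φ)⁻¹ ≤ t * ((1/t) * (cl⁻¹*q^k)) :=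
                  mul_le_mul_of_nonneg_left hψk ht.le
                have hrhs0 : (0:ℝ) ≤ t * ((1/t) * (cl⁻¹*q^k)) :=
                  mul_nonneg ht.le (mul_nonneg (one_div_nonneg.2 ht.le)
                    (mul_nonneg (inv_nonneg.2 hcl.le) (pow_nonneg hq0.le k)))
                exact div_le_div₀ hrhs0 hnum (by positivity) le_rfl
              · exact mul_le_mul_of_nonneg_left
                  (mul_le_mul_of_nonneg_right hminpow hv0.le) hε'0.le
              · exact mul_nonneg hε'0.le (mul_nonneg (pow_nonneg hmin0.le n) hv0.le)
              · have hqk : (0:ℝ) < q ^ k := pow_pos hq0 k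
                have : (0:ℝ) ≤ t * ((1/t) * (cl⁻¹ * q^k)) / (2^k*φ)^n := by positivity
                exact mul_nonneg hC0.le this
            refine hstep1.trans (le_of_eq ?_)
            have hne1 : ((2:ℝ)^k*φ)^n ≠ 0 := pow_ne_zero _ hrk.ne'
            rw [show ((2:ℝ)^(2*n) : ℝ) = 4^n by rw [pow_mul]; norm_num]
            field_simp
            ring
    calc ∫⁻ z in s2 \ s1, G z ∂volume
        ≤ ∫⁻ z in ⋃ k, A k, G z ∂volume := lintegral_mono_set hsub
      _ ≤ ∑' k, ∫⁻ z in A k, G z ∂volume := lintegral_iUnion_le _ _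
      _ ≤ ∑' k, ENNReal.ofReal ((ε' * (C * cl⁻¹ * v * 2^(2*n))) * q ^ k) :=
          ENNReal.tsum_le_tsum hterm
      _ ≤ ENNReal.ofReal ((ε' * (C * cl⁻¹ * v * 2^(2*n))) * (1-q)⁻¹) :=
          stmt6_geom _ _ hcst0 hq0.le hq1
      _ = ENNReal.ofReal (ε' * (C * cl⁻¹ * v * 2^(2*n) * S)) := by
          rw [hSdef]
          ring_nf
  -- far region
  have hfar : ∫⁻ z in s2ᶜ, G z ∂volume ≤ ENNReal.ofReal (t * Kx) := by
    -- tail-mass estimate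
    have hcstT : (0:ℝ) ≤ C * cl⁻¹ * v * 2^n * (t * ψ ρ⁻¹) :=
      mul_nonneg (mul_nonneg (mul_nonneg (mul_nonneg hC0.le (inv_nonneg.2 hcl.le))
        hv0.le) (by positivity)) (mul_nonneg ht.le hψρ.le)
    have htail : ∫⁻ z in {z : EuclideanSpace ℝ (Fin n) | ρ ≤ ‖y - z‖},
        ENNReal.ofReal (p t (y - z)) ∂volume
        ≤ ENNReal.ofReal ((C * cl⁻¹ * v * 2^n * (t * ψ ρ⁻¹)) * S) := by
      set B : ℕ → Set (EuclideanSpace ℝ (Fin n)) := fun j =>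
        closedBall y (2^(j+1)*ρ) \ ball y (2^j*ρ) with hBdef
      have hsubB : {z : EuclideanSpace ℝ (Fin n) | ρ ≤ ‖y - z‖} ⊆ ⋃ j, B j := by
        intro z hz
        have hd : ρ ≤ dist z y := by
          rw [dist_comm, dist_eq_norm]; exact hz
        obtain ⟨j, hj1, hj2⟩ := stmt6_dyadic ρ (dist z y) hρ0 hd
        refine Set.mem_iUnion.2 ⟨j, ⟨mem_closedBall.2 hj2, fun hin => ?_⟩⟩
        exact absurd (mem_ball.1 hin) (not_lt.2 hj1)
      have htermB : ∀ j : ℕ, ∫⁻ z in B j, ENNReal.ofReal (p t (y - z)) ∂volume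
          ≤ ENNReal.ofReal ((C * cl⁻¹ * v * 2^n * (t * ψ ρ⁻¹)) * q ^ j) := by
        intro j
        have hrj : (0:ℝ) < 2^j * ρ := by positivity
        have hbj0 : (0:ℝ) ≤ C * (t * ψ (2^j*ρ)⁻¹ / (2^j*ρ)^n) := by
          have := hψ_pos ((2:ℝ)^j*ρ)⁻¹ (by positivity)
          exact mul_nonneg hC0.le (div_nonneg (mul_nonneg ht.le this.le) (by positivity))
        have hkerB : ∀ z ∈ B j, p t (y - z) ≤ C * (t * ψ (2^j*ρ)⁻¹ / (2^j*ρ)^n) := by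
          intro z hz
          apply hK2 t ht _ hrj
          have hnl : ¬ dist z y < 2^j*ρ := fun h => hz.2 (mem_ball.2 h)
          push_neg at hnl
          rw [show ‖y - z‖ = dist z y from by rw [dist_comm, dist_eq_norm]]
          exact hnl
        have hBmeas : MeasurableSet (B j) := measurableSet_closedBall.diff measurableSet_ball
        have hψj : ψ ((2^j*ρ)⁻¹) ≤ ψ ρ⁻¹ * (cl⁻¹ * q^j) := by
          have h := hψdiv ρ⁻¹ (by positivity) j
          have heq : ρ⁻¹ / 2^j = (2^j*ρ)⁻¹ := by
            rw [mul_inv, div_eq_mul_inv, mul_comm]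
          rw [heq] at h
          exact h
        calc ∫⁻ z in B j, ENNReal.ofReal (p t (y - z)) ∂volume
            ≤ ∫⁻ _ in B j, ENNReal.ofReal (C * (t * ψ (2^j*ρ)⁻¹ / (2^j*ρ)^n)) ∂volume := by
              refine lintegral_mono_ae ?_
              filter_upwards [ae_restrict_mem hBmeas] with z hz
              exact ENNReal.ofReal_le_ofReal (hkerB z hz)
          _ = ENNReal.ofReal (C * (t * ψ (2^j*ρ)⁻¹ / (2^j*ρ)^n)) * volume (B j) :=
              setLIntegral_const _ _
          _ ≤ ENNReal.ofReal (C * (t * ψ (2^j*ρ)⁻¹ / (2^j*ρ)^n))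
                * volume (closedBall y (2^(j+1)*ρ)) :=
              mul_le_mul_right (measure_mono Set.diff_subset) _
          _ = ENNReal.ofReal (C * (t * ψ (2^j*ρ)⁻¹ / (2^j*ρ)^n))
                * ENNReal.ofReal ((2^(j+1)*ρ)^n * v) := by
              rw [hball y _ (by positivity)]
          _ = ENNReal.ofReal ((C * (t * ψ (2^j*ρ)⁻¹ / (2^j*ρ)^n)) * ((2^(j+1)*ρ)^n * v)) :=
              (ENNReal.ofReal_mul hbj0).symm
          _ ≤ ENNReal.ofReal ((C * cl⁻¹ * v * 2^n * (t * ψ ρ⁻¹)) * q ^ j) := by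
              apply ENNReal.ofReal_le_ofReal
              have hstep1 : C * (t * ψ (2^j*ρ)⁻¹ / (2^j*ρ)^n) * ((2^(j+1)*ρ)^n * v)
                  ≤ C * (t * (ψ ρ⁻¹ * (cl⁻¹ * q^j)) / (2^j*ρ)^n) * ((2^(j+1)*ρ)^n * v) := by
                refine mul_le_mul_of_nonneg_right ?_
                  (mul_nonneg (pow_nonneg (by positivity) n) hv0.le)
                refine mul_le_mul_of_nonneg_left ?_ hC0.le
                have hnum : t * ψ (2^j*ρ)⁻¹ ≤ t * (ψ ρ⁻¹ * (cl⁻¹ * q^j)) :=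
                  mul_le_mul_of_nonneg_left hψj ht.le
                have hrhs0 : (0:ℝ) ≤ t * (ψ ρ⁻¹ * (cl⁻¹ * q^j)) :=
                  mul_nonneg ht.le (mul_nonneg hψρ.le
                    (mul_nonneg (inv_nonneg.2 hcl.le) (pow_nonneg hq0.le j)))
                exact div_le_div₀ hrhs0 hnum (by positivity) le_rfl
              refine hstep1.trans (le_of_eq ?_)
              have hne1 : ((2:ℝ)^j*ρ)^n ≠ 0 := pow_ne_zero _ hrj.ne'
              field_simp
              ring
      calc ∫⁻ z in {z : EuclideanSpace ℝ (Fin n) | ρ ≤ ‖y - z‖},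
            ENNReal.ofReal (p t (y - z)) ∂volume
          ≤ ∫⁻ z in ⋃ j, B j, ENNReal.ofReal (p t (y - z)) ∂volume :=
            lintegral_mono_set hsubB
        _ ≤ ∑' j, ∫⁻ z in B j, ENNReal.ofReal (p t (y - z)) ∂volume :=
            lintegral_iUnion_le _ _
        _ ≤ ∑' j, ENNReal.ofReal ((C * cl⁻¹ * v * 2^n * (t * ψ ρ⁻¹)) * q ^ j) :=
            ENNReal.tsum_le_tsum htermB
        _ ≤ ENNReal.ofReal ((C * cl⁻¹ * v * 2^n * (t * ψ ρ⁻¹)) * (1-q)⁻¹) :=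
            stmt6_geom _ _ hcstT hq0.le hq1
        _ = ENNReal.ofReal ((C * cl⁻¹ * v * 2^n * (t * ψ ρ⁻¹)) * S) := by rw [hSdef]
    -- the far set is inside the tail region
    have hsubset : s2ᶜ ⊆ {z : EuclideanSpace ℝ (Fin n) | ρ ≤ ‖y - z‖} := by
      intro z hz
      have hd : r₀ < dist z x := not_le.1 (fun h => hz (mem_closedBall.2 h))
      rw [Set.mem_setOf_eq, show ‖y - z‖ = dist z y from by rw [dist_comm, dist_eq_norm]]
      have htri := dist_triangle z y x
      have hy'' : dist y x ≤ φ := by rw [dist_comm, dist_eq_norm]; exact hy'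
      rw [hρdef]
      linarith
    have hs2c : MeasurableSet (s2ᶜ : Set (EuclideanSpace ℝ (Fin n))) :=
      measurableSet_closedBall.compl
    have hbρ0 : (0:ℝ) ≤ C * (t * ψ ρ⁻¹ / ρ^n) :=
      mul_nonneg hC0.le (div_nonneg (mul_nonneg ht.le hψρ.le) (by positivity))
    -- pointwise splitting of G
    have hGle : ∀ z, G z ≤ ENNReal.ofReal (p t (y - z) * ‖f z‖)
        + ENNReal.ofReal ‖f x‖ * ENNReal.ofReal (p t (y - z)) := by
      intro z
      have h1 : p t (y-z) * ‖f z - f x‖ ≤ p t (y-z) * ‖f z‖ + p t (y-z) * ‖f x‖ := by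
        rw [← mul_add]
        exact mul_le_mul_of_nonneg_left (norm_sub_le _ _) (hp_nonneg t ht _)
      calc G z ≤ ENNReal.ofReal (p t (y-z) * ‖f z‖ + p t (y-z) * ‖f x‖) :=
            ENNReal.ofReal_le_ofReal h1
        _ = ENNReal.ofReal (p t (y-z) * ‖f z‖) + ENNReal.ofReal (p t (y-z) * ‖f x‖) :=
            ENNReal.ofReal_add (mul_nonneg (hp_nonneg t ht _) (norm_nonneg _))
              (mul_nonneg (hp_nonneg t ht _) (norm_nonneg _))
        _ = ENNReal.ofReal (p t (y-z) * ‖f z‖) + ENNReal.ofReal ‖f x‖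
              * ENNReal.ofReal (p t (y - z)) := by
            rw [mul_comm (p t (y-z)) ‖f x‖, ENNReal.ofReal_mul (norm_nonneg _)]
    have haemeas1 : AEMeasurable (fun z => ENNReal.ofReal (p t (y - z) * ‖f z‖))
        (volume.restrict (s2ᶜ : Set (EuclideanSpace ℝ (Fin n)))) :=
      (ENNReal.measurable_ofReal.comp_aemeasurable
        ((hpm.aemeasurable.mul hf.aemeasurable.norm).restrict))
    calc ∫⁻ z in s2ᶜ, G z ∂volume
        ≤ ∫⁻ z in s2ᶜ, (ENNReal.ofReal (p t (y - z) * ‖f z‖)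
            + ENNReal.ofReal ‖f x‖ * ENNReal.ofReal (p t (y - z))) ∂volume :=
          lintegral_mono hGle
      _ = (∫⁻ z in s2ᶜ, ENNReal.ofReal (p t (y - z) * ‖f z‖) ∂volume)
            + ∫⁻ z in s2ᶜ, ENNReal.ofReal ‖f x‖ * ENNReal.ofReal (p t (y - z)) ∂volume :=
          lintegral_add_left' haemeas1 _
      _ ≤ ENNReal.ofReal (C * (t * ψ ρ⁻¹ / ρ^n) * L)
            + ENNReal.ofReal ‖f x‖ * ENNReal.ofReal ((C * cl⁻¹ * v * 2^n * (t * ψ ρ⁻¹)) * S) := by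
          refine add_le_add ?_ ?_
          · calc ∫⁻ z in s2ᶜ, ENNReal.ofReal (p t (y - z) * ‖f z‖) ∂volume
                ≤ ∫⁻ z in s2ᶜ, ENNReal.ofReal (C * (t * ψ ρ⁻¹ / ρ^n))
                    * ENNReal.ofReal ‖f z‖ ∂volume := by
                  refine lintegral_mono_ae ?_
                  filter_upwards [ae_restrict_mem hs2c] with z hz
                  rw [← ENNReal.ofReal_mul hbρ0]
                  refine ENNReal.ofReal_le_ofReal
                    (mul_le_mul_of_nonneg_right ?_ (norm_nonneg _))
                  exact hK2 t ht ρ hρ0 _ (hsubset hz)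
              _ = ENNReal.ofReal (C * (t * ψ ρ⁻¹ / ρ^n))
                    * ∫⁻ z in s2ᶜ, ENNReal.ofReal ‖f z‖ ∂volume :=
                  lintegral_const_mul' _ _ ENNReal.ofReal_ne_top
              _ ≤ ENNReal.ofReal (C * (t * ψ ρ⁻¹ / ρ^n)) * ENNReal.ofReal L := by
                  refine mul_le_mul_right ?_ _
                  rw [← hLlin]
                  exact setLIntegral_le_lintegral _ _
              _ = ENNReal.ofReal (C * (t * ψ ρ⁻¹ / ρ^n) * L) :=
                  (ENNReal.ofReal_mul hbρ0).symm
          · calc ∫⁻ z in s2ᶜ, ENNReal.ofReal ‖f x‖ * ENNReal.ofReal (p t (y - z)) ∂volume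
                = ENNReal.ofReal ‖f x‖ * ∫⁻ z in s2ᶜ, ENNReal.ofReal (p t (y - z)) ∂volume :=
                  lintegral_const_mul' _ _ ENNReal.ofReal_ne_top
              _ ≤ ENNReal.ofReal ‖f x‖
                    * ENNReal.ofReal ((C * cl⁻¹ * v * 2^n * (t * ψ ρ⁻¹)) * S) :=
                  mul_le_mul_right ((lintegral_mono_set hsubset).trans htail) _
      _ = ENNReal.ofReal (t * Kx) := by
          rw [← ENNReal.ofReal_mul (norm_nonneg _),
            ← ENNReal.ofReal_add (mul_nonneg hbρ0 hL0)
              (mul_nonneg (norm_nonneg _) (mul_nonneg hcstT hS0.le))]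
          congr 1
          rw [hKxdef, hK1def]
          ring
  -- combine
  have htot : ∫⁻ z, G z ∂volume ≤ ENNReal.ofReal (ε' * D + t * Kx) := by
    refine hsplit.trans ?_
    have h1 : ENNReal.ofReal (ε' * (C * 2 ^ n * v))
        + (ENNReal.ofReal (ε' * (C * cl⁻¹ * v * 2 ^ (2*n) * S)) + ENNReal.ofReal (t * Kx))
        = ENNReal.ofReal (ε' * D + t * Kx) := by
      rw [← ENNReal.ofReal_add (by positivity)
          (mul_nonneg ht.le hKx0),
        ← ENNReal.ofReal_add (by positivity) (by positivity)]
      congr 1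
      rw [hDdef]; ring
    calc _ ≤ ENNReal.ofReal (ε' * (C * 2 ^ n * v))
        + (ENNReal.ofReal (ε' * (C * cl⁻¹ * v * 2 ^ (2*n) * S)) + ENNReal.ofReal (t * Kx)) :=
          add_le_add hnear (add_le_add hmid hfar)
      _ = _ := h1
  have hfinal : |(∫ z, p t (y - z) * f z ∂volume) - f x| ≤ ε' * D + t * Kx := by
    refine habs.trans ?_
    rw [hInt_eq]
    exact ENNReal.toReal_le_of_le_ofReal
      (by positivity) htot
  have hεD : ε' * D ≤ ε / 2 := by
    have h1 : ε' * D ≤ ε' * (D + 1) :=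
      mul_le_mul_of_nonneg_left (le_add_of_nonneg_right zero_le_one) hε'0.le
    have h2 : ε' * (D + 1) = ε / 2 := by
      rw [hε'def]; field_simp
    exact h1.trans (le_of_eq h2)
  have htK : t * Kx < ε / 2 := by
    have h1 : t * Kx ≤ t * (Kx + 1) :=
      mul_le_mul_of_nonneg_left (le_add_of_nonneg_right zero_le_one) ht.le
    have h2 : t * (Kx + 1) < δ2 * (Kx + 1) := by
      exact mul_lt_mul_of_pos_right htδ2 (by linarith)
    have h3 : δ2 * (Kx + 1) = ε / 2 := by
      rw [hδ2def]; field_simp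
    exact lt_of_le_of_lt h1 (h3 ▸ h2)
  calc |(∫ z, p t (y - z) * f z ∂volume) - f x| ≤ ε' * D + t * Kx := hfinal
    _ < ε / 2 + ε / 2 := add_lt_add_of_le_of_lt hεD htK
    _ = ε := by ring
end

section
/- Let n ≥ 1, let ψ be a weak-scaling function as in the context, and let (p_t)_{t>0} satisfy the two-sided bound in the context with constant C; assume in addition that each p_t is radial and radially non-increasing. Set ψ̃(θ) = θ² + ψ(θ), φ̃(r) = 1/ψ̃⁻(1/r) where ψ̃⁻ is the inverse of ψ̃, let p̂_t(x) = (4πt)^{-n/2} e^{-|x|²/(4t)} be the Gaussian kernel, and p̃_t = p̂_t ∗ p_t (convolution). Then for every R > 0 there exists a constant c_R > 0 such that p̃_R(x) ≥ c_R · R ψ̃(|x|⁻¹)/|x|ⁿ for all x with |x| ≥ φ̃(R). -/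
open MeasureTheory Metric ENNReal Real

/-- The Gaussian heat kernel on `ℝⁿ`. -/
noncomputable def gaussKer (n : ℕ) (t : ℝ) (x : EuclideanSpace ℝ (Fin n)) : ℝ :=
  (4 * Real.pi * t) ^ (-(n : ℝ) / 2) * Real.exp (-‖x‖ ^ 2 / (4 * t))

lemma aux_integrable_gauss {V : Type*} [NormedAddCommGroup V] [InnerProductSpace ℝ V]
    [FiniteDimensional ℝ V] [MeasurableSpace V] [BorelSpace V] {b : ℝ} (hb : 0 < b) :
    Integrable (fun v : V => Real.exp (-‖v‖ ^ 2 / b)) := by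
  have h := (GaussianFourier.integrable_cexp_neg_mul_sq_norm_add (V := V) (b := (b⁻¹ : ℂ))
      (by simpa using inv_pos.2 hb) 0 0).norm
  have heq : ∀ v : V, ‖Complex.exp (-(b⁻¹ : ℂ) * (‖v‖ : ℂ) ^ 2 +
      0 * (inner ℝ (0 : V) v : ℝ))‖ = Real.exp (-‖v‖ ^ 2 / b) := by
    intro v
    rw [Complex.norm_exp]
    congr 1
    push_cast
    simp only [zero_mul, add_zero]
    norm_cast
    ring
  exact h.congr (Filter.Eventually.of_forall heq)

set_option maxHeartbeats 2000000 in
/-- For the kernel `p̃_t = p̂_t ∗ p_t` of a mixed local-nonlocal operator,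
with `ψ̃(θ) = θ² + ψ(θ)` and `φ̃(r) = 1/ψ̃⁻(1/r)`, one has the lower bound
`p̃_R(x) ≥ c_R · R ψ̃(|x|⁻¹)/|x|ⁿ` for `|x| ≥ φ̃(R)`. -/
theorem stmt_7 (n : ℕ) (hn : 1 ≤ n)
    (ψ ψi : ℝ → ℝ)
    (hψ_pos : ∀ θ : ℝ, 0 < θ → 0 < ψ θ)
    (hψ_cont : ContinuousOn ψ (Set.Ioi 0))
    (hψ_mono : StrictMonoOn ψ (Set.Ioi 0))
    (hψi_pos : ∀ s : ℝ, 0 < s → 0 < ψi s)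
    (hψi_right : ∀ s : ℝ, 0 < s → ψ (ψi s) = s)
    (hψi_left : ∀ θ : ℝ, 0 < θ → ψi (ψ θ) = θ)
    (al ab cl Cb : ℝ)
    (hal : 0 < al) (halab : al ≤ ab) (hab : ab < 2)
    (hcl : 0 < cl) (hcl1 : cl ≤ 1) (hCb : 1 ≤ Cb)
    (hscale : ∀ lam θ : ℝ, 1 ≤ lam → 0 < θ →
      cl * lam ^ al * ψ θ ≤ ψ (lam * θ) ∧ ψ (lam * θ) ≤ Cb * lam ^ ab * ψ θ)
    -- inverse of ψ̃(θ) = θ² + ψ(θ)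
    (ψti : ℝ → ℝ)
    (hψti_pos : ∀ s : ℝ, 0 < s → 0 < ψti s)
    (hψti_right : ∀ s : ℝ, 0 < s → (ψti s) ^ 2 + ψ (ψti s) = s)
    (hψti_left : ∀ θ : ℝ, 0 < θ → ψti (θ ^ 2 + ψ θ) = θ)
    (p : ℝ → EuclideanSpace ℝ (Fin n) → ℝ)
    (hp_nonneg : ∀ t : ℝ, 0 < t → ∀ x, 0 ≤ p t x)
    (hp_meas : ∀ t : ℝ, 0 < t → Measurable (p t))
    (hp_radial : ∀ t : ℝ, 0 < t → ∀ x y : EuclideanSpace ℝ (Fin n),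
      ‖x‖ ≤ ‖y‖ → p t y ≤ p t x)
    (C : ℝ) (hC : 1 ≤ C)
    (hbound : ∀ t : ℝ, 0 < t → ∀ x : EuclideanSpace ℝ (Fin n), x ≠ 0 →
      C⁻¹ * min ((ψi (1 / t)) ^ n) (t * ψ (‖x‖⁻¹) / ‖x‖ ^ n) ≤ p t x ∧
      p t x ≤ C * min ((ψi (1 / t)) ^ n) (t * ψ (‖x‖⁻¹) / ‖x‖ ^ n)) :
    ∀ R : ℝ, 0 < R → ∃ cR : ℝ, 0 < cR ∧
      ∀ x : EuclideanSpace ℝ (Fin n), (ψti (1 / R))⁻¹ ≤ ‖x‖ →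
        cR * (R * ((‖x‖⁻¹) ^ 2 + ψ (‖x‖⁻¹)) / ‖x‖ ^ n)
          ≤ ∫ y, gaussKer n R (x - y) * p R y ∂volume := by
  intro R hR
  have hCpos : (0:ℝ) < C := lt_of_lt_of_le zero_lt_one hC
  have hCbpos : (0:ℝ) < Cb := lt_of_lt_of_le zero_lt_one hCb
  have hRinv : (0:ℝ) < 1 / R := by positivity
  set θ0 : ℝ := ψti (1 / R) with hθ0def
  have hθ0 : 0 < θ0 := hψti_pos _ hRinv
  have hθ0R : θ0 ^ 2 + ψ θ0 = 1 / R := hψti_right _ hRinv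
  have hψθ0 : 0 < ψ θ0 := hψ_pos _ hθ0
  have hψmono : ∀ a b : ℝ, 0 < a → a ≤ b → ψ a ≤ ψ b := by
    intro a b ha hab
    rcases eq_or_lt_of_le hab with rfl | h
    · exact le_rfl
    · exact (hψ_mono (Set.mem_Ioi.2 ha) (Set.mem_Ioi.2 (lt_trans ha h)) h).le
  -- θ0 ≤ ψi (1/R)
  have hθ0le : θ0 ≤ ψi (1 / R) := by
    by_contra h
    push_neg at h
    have h2 : ψ (ψi (1 / R)) < ψ θ0 :=
      hψ_mono (Set.mem_Ioi.2 (hψi_pos _ hRinv)) (Set.mem_Ioi.2 hθ0) h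
    rw [hψi_right _ hRinv] at h2
    nlinarith [sq_nonneg θ0]
  set K : ℝ := Cb * θ0 ^ 2 / ψ θ0 with hKdef
  have hK : 0 ≤ K := by positivity
  set ρ : ℝ := min θ0⁻¹ (Real.sqrt R) with hρdef
  have hρ : 0 < ρ := lt_min (by positivity) (Real.sqrt_pos.2 hR)
  set A : ℝ := (4 * Real.pi * R) ^ (-(n:ℝ) / 2) * Real.exp (-ρ ^ 2 / (4 * R)) with hAdef
  have hπ : (0:ℝ) < 4 * Real.pi * R := by positivity
  have hA : 0 < A := by positivity
  set c1 : ℝ := (C * Cb * 4 * 2 ^ n)⁻¹ with hc1def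
  have hc1 : 0 < c1 := by positivity
  set Vb : ℝ := (volume (ball (0 : EuclideanSpace ℝ (Fin n)) ρ)).toReal with hVdef
  have hVb : 0 < Vb := by
    apply ENNReal.toReal_pos
    · exact (measure_ball_pos volume 0 hρ).ne'
    · exact measure_ball_lt_top.ne
  refine ⟨A * c1 * Vb / (K + 1), by positivity, ?_⟩
  intro x hx
  have hxpos : 0 < ‖x‖ := lt_of_lt_of_le (by positivity) hx
  set θ : ℝ := ‖x‖⁻¹ with hθdef
  have hθ : 0 < θ := by positivity
  have hθθ0 : θ ≤ θ0 := (inv_le_comm₀ hxpos hθ0).2 hx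
  have hψθ : 0 < ψ θ := hψ_pos _ hθ
  -- Step A : θ^2 ≤ K * ψ θ
  have stepA : θ ^ 2 ≤ K * ψ θ := by
    set r : ℝ := θ / θ0 with hrdef
    have hr0 : 0 < r := by positivity
    have hr1 : r ≤ 1 := (div_le_one hθ0).2 hθθ0
    have hlam : 1 ≤ θ0 / θ := (le_div_iff₀ hθ).2 (by linarith)
    have h1 := (hscale (θ0 / θ) θ hlam hθ).2
    rw [div_mul_cancel₀ _ (ne_of_gt hθ)] at h1
    have hinv : θ0 / θ = r⁻¹ := by rw [hrdef]; field_simp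
    rw [hinv] at h1
    have h2 : r ^ ab * ψ θ0 ≤ Cb * ψ θ := by
      have h3 : (r⁻¹) ^ ab = (r ^ ab)⁻¹ := Real.inv_rpow hr0.le ab
      rw [h3] at h1
      have h4 : 0 < r ^ ab := Real.rpow_pos_of_pos hr0 ab
      calc r ^ ab * ψ θ0 ≤ r ^ ab * (Cb * (r ^ ab)⁻¹ * ψ θ) := by
            apply mul_le_mul_of_nonneg_left h1 h4.le
        _ = Cb * ψ θ := by field_simp
    have h5 : r ^ (2:ℝ) ≤ r ^ ab :=
      Real.rpow_le_rpow_of_exponent_ge hr0 hr1 hab.le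
    have h6 : θ ^ 2 = θ0 ^ 2 * r ^ (2:ℝ) := by
      rw [show ((2:ℝ)) = ((2:ℕ):ℝ) by norm_num, Real.rpow_natCast, hrdef]
      field_simp
    rw [h6, hKdef]
    have h7 : θ0 ^ 2 * r ^ (2:ℝ) ≤ θ0 ^ 2 * r ^ ab :=
      mul_le_mul_of_nonneg_left h5 (by positivity)
    refine h7.trans ?_
    rw [div_mul_eq_mul_div, le_div_iff₀ hψθ0]
    calc θ0 ^ 2 * r ^ ab * ψ θ0 = θ0 ^ 2 * (r ^ ab * ψ θ0) := by ring
      _ ≤ θ0 ^ 2 * (Cb * ψ θ) := mul_le_mul_of_nonneg_left h2 (by positivity)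
      _ = Cb * θ0 ^ 2 * ψ θ := by ring
  -- Step B : ψ θ ≤ 4 * Cb * ψ (θ / 2)
  have stepB : ψ θ ≤ 4 * Cb * ψ (θ / 2) := by
    have h1 := (hscale 2 (θ / 2) one_le_two (by positivity)).2
    rw [mul_div_cancel₀ _ (two_ne_zero)] at h1
    have h2 : (2:ℝ) ^ ab ≤ (2:ℝ) ^ (2:ℝ) :=
      Real.rpow_le_rpow_of_exponent_le one_le_two hab.le
    have h3 : (2:ℝ) ^ (2:ℝ) = 4 := by
      rw [show (2:ℝ) = ((2:ℕ):ℝ) by norm_num, Real.rpow_natCast]; norm_num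
    have hψθ2 : 0 < ψ (θ / 2) := hψ_pos _ (by positivity)
    have h4 : Cb * 2 ^ ab ≤ Cb * 4 := by nlinarith
    calc ψ θ ≤ Cb * 2 ^ ab * ψ (θ / 2) := h1
      _ ≤ Cb * 4 * ψ (θ / 2) := mul_le_mul_of_nonneg_right h4 hψθ2.le
      _ = 4 * Cb * ψ (θ / 2) := by ring
  -- Step C : R * ψ θ ≤ 1
  have stepC : R * ψ θ ≤ 1 := by
    have h1 : ψ θ ≤ ψ θ0 := hψmono _ _ hθ hθθ0
    have h2 : ψ θ0 ≤ 1 / R := by linarith [sq_nonneg θ0]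
    calc R * ψ θ ≤ R * (1 / R) := mul_le_mul_of_nonneg_left (h1.trans h2) hR.le
      _ = 1 := by field_simp
  -- Step D/E setup : point w with ‖w‖ = 2‖x‖
  set e : EuclideanSpace ℝ (Fin n) := EuclideanSpace.single (⟨0, hn⟩ : Fin n) (1:ℝ) with hedef
  have he : ‖e‖ = 1 := by
    rw [hedef, EuclideanSpace.norm_single]; norm_num
  set w : EuclideanSpace ℝ (Fin n) := (2 * ‖x‖) • e with hwdef
  have hw : ‖w‖ = 2 * ‖x‖ := by
    rw [hwdef, norm_smul, he, mul_one, Real.norm_eq_abs, abs_of_pos (by positivity)]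
  have hwne : w ≠ 0 := by
    intro h
    rw [h, norm_zero] at hw
    nlinarith
  have hwinv : ‖w‖⁻¹ = θ / 2 := by rw [hw, hθdef, mul_inv]; ring
  -- the nonlocal term dominates the min at w
  have hxn : (0:ℝ) < ‖x‖ ^ n := by positivity
  have hDkey : R * ψ θ / ‖x‖ ^ n ≤ ψi (1 / R) ^ n := by
    have h1 : (‖x‖ ^ n)⁻¹ ≤ θ0 ^ n := by
      rw [← inv_pow]
      exact pow_le_pow_left₀ (by positivity) hθθ0 n
    have h2 : θ0 ^ n ≤ ψi (1 / R) ^ n := pow_le_pow_left₀ hθ0.le hθ0le n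
    calc R * ψ θ / ‖x‖ ^ n = (R * ψ θ) * (‖x‖ ^ n)⁻¹ := by rw [div_eq_mul_inv]
      _ ≤ 1 * θ0 ^ n := by
          apply mul_le_mul stepC h1 (by positivity) zero_le_one
      _ = θ0 ^ n := one_mul _
      _ ≤ ψi (1 / R) ^ n := h2
  have hDw : R * ψ (‖w‖⁻¹) / ‖w‖ ^ n ≤ ψi (1 / R) ^ n := by
    refine le_trans ?_ hDkey
    rw [hwinv]
    have h1 : ψ (θ / 2) ≤ ψ θ := hψmono _ _ (by positivity) (by linarith)
    have h2 : ‖x‖ ^ n ≤ ‖w‖ ^ n := by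
      apply pow_le_pow_left₀ hxpos.le
      rw [hw]; linarith
    apply div_le_div₀ (by positivity) (by nlinarith) hxn h2
  -- Step E : lower bound for p R w
  have hpw : c1 * (R * ψ θ / ‖x‖ ^ n) ≤ p R w := by
    have h1 := (hbound R hR w hwne).1
    rw [min_eq_right hDw] at h1
    refine le_trans ?_ h1
    rw [hwinv, hw, mul_pow]
    have h2 : ψ θ / (4 * Cb) ≤ ψ (θ / 2) := by
      rw [div_le_iff₀ (by positivity)]
      nlinarith [stepB]
    have h5 : c1 * (R * ψ θ / ‖x‖ ^ n) = C⁻¹ * (R * (ψ θ / (4 * Cb)) / (2 ^ n * ‖x‖ ^ n)) := by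
      rw [hc1def]
      field_simp
    rw [h5]
    gcongr
  -- gaussian kernel lower bound on the ball
  have hρx : ρ ≤ ‖x‖ := le_trans (min_le_left _ _) (by rwa [hθ0def] at hx)
  have hgauss_lb : ∀ y ∈ ball x ρ, A ≤ gaussKer n R (x - y) := by
    intro y hy
    rw [mem_ball, dist_comm] at hy
    have h1 : ‖x - y‖ ≤ ρ := by
      rw [← dist_eq_norm]
      exact hy.le
    have h2 : ‖x - y‖ ^ 2 ≤ ρ ^ 2 := by nlinarith [norm_nonneg (x - y)]
    unfold gaussKer
    rw [hAdef]
    apply mul_le_mul_of_nonneg_left _ (by positivity)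
    apply Real.exp_le_exp.2
    rw [div_le_div_iff₀ (by positivity) (by positivity)]
    nlinarith [mul_le_mul_of_nonneg_right h2 (by positivity : (0:ℝ) ≤ 4 * R)]
  -- p lower bound on the ball
  have hp_lb : ∀ y ∈ ball x ρ, c1 * (R * ψ θ / ‖x‖ ^ n) ≤ p R y := by
    intro y hy
    refine le_trans hpw ?_
    apply hp_radial R hR y w
    rw [hw]
    rw [mem_ball] at hy
    calc ‖y‖ = ‖x + (y - x)‖ := by rw [show x + (y - x) = y from by abel]
      _ ≤ ‖x‖ + ‖y - x‖ := norm_add_le _ _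
      _ ≤ ‖x‖ + ρ := by
          rw [← dist_eq_norm', dist_comm]
          exact add_le_add le_rfl hy.le
      _ ≤ 2 * ‖x‖ := by linarith
  -- measurability and integrability
  haveI : Nontrivial (EuclideanSpace ℝ (Fin n)) := by
    refine ⟨0, e, fun h => ?_⟩
    have := congrArg norm h
    rw [norm_zero, he] at this
    norm_num at this
  have hGcont : Continuous (fun y : EuclideanSpace ℝ (Fin n) => gaussKer n R (x - y)) := by
    unfold gaussKer
    fun_prop
  have hGnonneg : ∀ y : EuclideanSpace ℝ (Fin n), 0 ≤ gaussKer n R (x - y) := by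
    intro y
    unfold gaussKer
    positivity
  have hGint : Integrable (fun y : EuclideanSpace ℝ (Fin n) => gaussKer n R (x - y)) := by
    unfold gaussKer
    apply Integrable.const_mul
    have h0 : Integrable (fun v : EuclideanSpace ℝ (Fin n) =>
        Real.exp (-‖v‖ ^ 2 / (4 * R))) := aux_integrable_gauss (by positivity)
    exact (integrable_comp_sub_left
      (fun v => Real.exp (-‖v‖ ^ 2 / (4 * R))) x).2 h0
  set g : EuclideanSpace ℝ (Fin n) → ℝ := fun y => gaussKer n R (x - y) * p R y with hgdef
  have hgnonneg : ∀ y, 0 ≤ g y := fun y => mul_nonneg (hGnonneg y) (hp_nonneg R hR y)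
  have hgmeas : AEStronglyMeasurable g volume :=
    (hGcont.measurable.mul (hp_meas R hR)).aestronglyMeasurable
  set M : ℝ := C * ψi (1 / R) ^ n with hMdef
  have hgint : Integrable g := by
    apply Integrable.mono' (hGint.const_mul M) hgmeas
    have hae : ∀ᵐ y : EuclideanSpace ℝ (Fin n) ∂volume, y ≠ 0 := by
      refine (MeasureTheory.ae_iff).2 ?_
      simp only [not_not]
      have : {y : EuclideanSpace ℝ (Fin n) | y = 0} = {0} := by ext y; simp
      rw [this]
      exact measure_singleton 0
    filter_upwards [hae] with y hy
    rw [Real.norm_eq_abs, abs_of_nonneg (hgnonneg y)]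
    have h1 := (hbound R hR y hy).2
    have h2 : p R y ≤ M := by
      refine h1.trans ?_
      rw [hMdef]
      exact mul_le_mul_of_nonneg_left (min_le_left _ _) hCpos.le
    calc g y ≤ gaussKer n R (x - y) * M :=
          mul_le_mul_of_nonneg_left h2 (hGnonneg y)
      _ = M * gaussKer n R (x - y) := mul_comm _ _
  -- the main chain
  have hball : (volume (ball x ρ)).toReal = Vb := by
    rw [hVdef, Measure.addHaar_ball_center]
  have hchain1 : A * (c1 * (R * ψ θ / ‖x‖ ^ n)) * Vb ≤ ∫ y, g y ∂volume := by
    have hsub : ∫ y in ball x ρ, (A * (c1 * (R * ψ θ / ‖x‖ ^ n))) ∂volume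
        ≤ ∫ y in ball x ρ, g y ∂volume := by
      apply setIntegral_mono_on
      · exact integrableOn_const measure_ball_lt_top.ne
      · exact hgint.integrableOn
      · exact measurableSet_ball
      · intro y hy
        exact mul_le_mul (hgauss_lb y hy) (hp_lb y hy) (by positivity) (hGnonneg y)
    have hconst : ∫ y in ball x ρ, (A * (c1 * (R * ψ θ / ‖x‖ ^ n))) ∂volume
        = A * (c1 * (R * ψ θ / ‖x‖ ^ n)) * Vb := by
      rw [setIntegral_const, measureReal_def, hball, smul_eq_mul, mul_comm]
    have hrest : ∫ y in ball x ρ, g y ∂volume ≤ ∫ y, g y ∂volume :=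
      setIntegral_le_integral hgint (Filter.Eventually.of_forall hgnonneg)
    calc A * (c1 * (R * ψ θ / ‖x‖ ^ n)) * Vb
        = ∫ y in ball x ρ, (A * (c1 * (R * ψ θ / ‖x‖ ^ n))) ∂volume := hconst.symm
      _ ≤ ∫ y in ball x ρ, g y ∂volume := hsub
      _ ≤ ∫ y, g y ∂volume := hrest
  refine le_trans ?_ hchain1
  -- finally : cR * (R * (θ² + ψθ)/‖x‖^n) ≤ A*c1*V * (R ψθ/‖x‖^n)
  have hθψ : θ ^ 2 + ψ θ ≤ (K + 1) * ψ θ := by linarith [stepA]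
  have hK1 : (0:ℝ) < K + 1 := by linarith
  have key : R * (θ ^ 2 + ψ θ) / ‖x‖ ^ n ≤ (K + 1) * (R * ψ θ / ‖x‖ ^ n) := by
    have h : R * (θ ^ 2 + ψ θ) ≤ (K + 1) * (R * ψ θ) := by
      have h0 := mul_le_mul_of_nonneg_left hθψ hR.le
      calc R * (θ ^ 2 + ψ θ) ≤ R * ((K + 1) * ψ θ) := h0
        _ = (K + 1) * (R * ψ θ) := by ring
    have h1 : R * (θ ^ 2 + ψ θ) / ‖x‖ ^ n ≤ (K + 1) * (R * ψ θ) / ‖x‖ ^ n :=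
      div_le_div₀ (mul_nonneg (by linarith) (mul_nonneg hR.le hψθ.le)) h hxn le_rfl
    exact le_of_le_of_eq h1 (mul_div_assoc _ _ _)
  calc A * c1 * Vb / (K + 1) * (R * (θ ^ 2 + ψ θ) / ‖x‖ ^ n)
      ≤ A * c1 * Vb / (K + 1) * ((K + 1) * (R * ψ θ / ‖x‖ ^ n)) := by
        exact mul_le_mul_of_nonneg_left key
          (div_nonneg (mul_nonneg (mul_nonneg hA.le hc1.le) hVb.le) hK1.le)
    _ = A * (c1 * (R * ψ θ / ‖x‖ ^ n)) * Vb := by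
        field_simp [hK1.ne']
end

section
/- Let n ≥ 1 and let ψ be a weak-scaling function as in the context. Set ψ̃(θ) = θ² + ψ(θ) and φ̃(r) = 1/ψ̃⁻(1/r), where ψ̃⁻ is the inverse of ψ̃. Let R > 0 and let (q_t)_{0<t≤R} be nonnegative measurable functions on ℝⁿ such that (a) q_t(x) ≤ C min(t^{-n/2}, t ψ̃(|x|⁻¹)/|x|ⁿ) for all 0 < t ≤ R and x ≠ 0, for some constant C, and (b) q_R(x) ≥ c_R · R ψ̃(|x|⁻¹)/|x|ⁿ for all |x| ≥ φ̃(R), for some c_R > 0. Then there exist constants ξ₁(R) and ξ₂(R) such that for every measurable f ≥ 0 and every x ∈ ℝⁿ, sup_{0<t<R} ∫_{ℝⁿ} q_t(x−y) f(y) dy ≤ ξ₁(R) M_{Γ̃(R)} f(x) + ξ₂(R) ∫_{ℝⁿ} q_R(x−y) f(y) dy, where Γ̃(R) = φ̃(2R) and M_r is the local Hardy–Littlewood maximal function with respect to Lebesgue measure. -/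
set_option maxHeartbeats 1000000


open MeasureTheory Metric ENNReal

/-- Local Hardy–Littlewood maximal function `M_R f` (with respect to a measure `μ`). -/
noncomputable def locMax {X : Type*} [MetricSpace X] [MeasurableSpace X]
    (μ : Measure X) (R : ℝ) (f : X → ℝ) (x : X) : ℝ≥0∞ :=
  ⨆ (s : ℝ) (_ : s ∈ Set.Ioo 0 R),
    (μ (ball x s))⁻¹ * ∫⁻ y in ball x s, ENNReal.ofReal |f y| ∂μ

lemma tsum_ofReal_le_of_partial {u : ℕ → ℝ} {B : ℝ} (hu : ∀ k, 0 ≤ u k)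
    (h : ∀ N, ∑ k ∈ Finset.range N, u k ≤ B) :
    (∑' k, ENNReal.ofReal (u k)) ≤ ENNReal.ofReal B := by
  rw [ENNReal.tsum_eq_iSup_sum]
  refine iSup_le fun F => ?_
  rw [← ENNReal.ofReal_sum_of_nonneg (fun i _ => hu i)]
  apply ENNReal.ofReal_le_ofReal
  obtain ⟨N, hN⟩ := F.exists_nat_subset_range
  exact le_trans (Finset.sum_le_sum_of_subset_of_nonneg hN (fun i _ _ => hu i)) (h N)

/-- Time-space maximal inequality for a kernel family `(q_t)_{0<t≤R}`
satisfying the mixed local-nonlocal upper bound (a) and lower bound (b) at time `R`: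
`sup_{0<t<R} ∫ q_t(x−y) f(y) dy ≤ ξ₁(R) M_{φ̃(2R)} f(x) + ξ₂(R) ∫ q_R(x−y) f(y) dy`,
where `ψ̃(θ) = θ² + ψ(θ)` and `φ̃(r) = 1/ψ̃⁻(1/r)`. -/
theorem stmt_8 (n : ℕ) (hn : 1 ≤ n)
    (ψ : ℝ → ℝ)
    (hψ_pos : ∀ θ : ℝ, 0 < θ → 0 < ψ θ)
    (hψ_cont : ContinuousOn ψ (Set.Ioi 0))
    (hψ_mono : StrictMonoOn ψ (Set.Ioi 0))
    (al ab cl Cb : ℝ)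
    (hal : 0 < al) (halab : al ≤ ab) (hab : ab < 2)
    (hcl : 0 < cl) (hcl1 : cl ≤ 1) (hCb : 1 ≤ Cb)
    (hscale : ∀ lam θ : ℝ, 1 ≤ lam → 0 < θ →
      cl * lam ^ al * ψ θ ≤ ψ (lam * θ) ∧ ψ (lam * θ) ≤ Cb * lam ^ ab * ψ θ)
    -- inverse of ψ̃(θ) = θ² + ψ(θ)
    (ψti : ℝ → ℝ)
    (hψti_pos : ∀ s : ℝ, 0 < s → 0 < ψti s)
    (hψti_right : ∀ s : ℝ, 0 < s → (ψti s) ^ 2 + ψ (ψti s) = s)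
    (hψti_left : ∀ θ : ℝ, 0 < θ → ψti (θ ^ 2 + ψ θ) = θ)
    (R : ℝ) (hR : 0 < R)
    (q : ℝ → EuclideanSpace ℝ (Fin n) → ℝ)
    (hq_nonneg : ∀ t : ℝ, 0 < t → t ≤ R → ∀ x, 0 ≤ q t x)
    (hq_meas : ∀ t : ℝ, 0 < t → t ≤ R → Measurable (q t))
    (C : ℝ) (hC : 0 < C)
    (hq_upper : ∀ t : ℝ, 0 < t → t ≤ R → ∀ x : EuclideanSpace ℝ (Fin n), x ≠ 0 →
      q t x ≤ C * min (t ^ (-(n : ℝ) / 2))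
        (t * ((‖x‖⁻¹) ^ 2 + ψ (‖x‖⁻¹)) / ‖x‖ ^ n))
    (cR : ℝ) (hcR : 0 < cR)
    (hq_lower : ∀ x : EuclideanSpace ℝ (Fin n), (ψti (1 / R))⁻¹ ≤ ‖x‖ →
      cR * (R * ((‖x‖⁻¹) ^ 2 + ψ (‖x‖⁻¹)) / ‖x‖ ^ n) ≤ q R x) :
    ∃ ξ₁ ξ₂ : ℝ, 0 < ξ₁ ∧ 0 < ξ₂ ∧
      ∀ f : EuclideanSpace ℝ (Fin n) → ℝ, Measurable f → (∀ y, 0 ≤ f y) →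
      ∀ x : EuclideanSpace ℝ (Fin n),
        (⨆ (t : ℝ) (_ : t ∈ Set.Ioo 0 R),
            ∫⁻ y, ENNReal.ofReal (q t (x - y) * f y) ∂volume)
          ≤ ENNReal.ofReal ξ₁ * locMax volume ((ψti (1 / (2 * R)))⁻¹) f x
            + ENNReal.ofReal ξ₂ * ∫⁻ y, ENNReal.ofReal (q R (x - y) * f y) ∂volume := by
  haveI : Nontrivial (EuclideanSpace ℝ (Fin n)) := by
    refine ⟨⟨EuclideanSpace.single ⟨0, hn⟩ (1 : ℝ), 0, fun h => ?_⟩⟩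
    have := congrArg (fun v => v ⟨0, hn⟩) h
    simp [EuclideanSpace.single_apply] at this
  -- basic positivity
  have hψti_monolt : ∀ s₁ s₂ : ℝ, 0 < s₁ → s₁ < s₂ → ψti s₁ < ψti s₂ := by
    intro s₁ s₂ h₁ h₁₂
    by_contra hcon
    push_neg at hcon
    have ha : 0 < ψti s₁ := hψti_pos _ h₁
    have hb : 0 < ψti s₂ := hψti_pos _ (h₁.trans h₁₂)
    have : s₂ ≤ s₁ := by
      rw [← hψti_right s₁ h₁, ← hψti_right s₂ (h₁.trans h₁₂)]
      rcases eq_or_lt_of_le hcon with he | hlt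
      · rw [he]
      · have h1 : (ψti s₂) ^ 2 ≤ (ψti s₁) ^ 2 := by nlinarith
        have h2 : ψ (ψti s₂) < ψ (ψti s₁) := hψ_mono hb ha hlt
        linarith
    linarith
  set ρ : ℝ := (ψti (1 / R))⁻¹ with hρdef
  set Γ : ℝ := (ψti (1 / (2 * R)))⁻¹ with hΓdef
  have hψtiR : 0 < ψti (1 / R) := hψti_pos _ (by positivity)
  have hψti2R : 0 < ψti (1 / (2 * R)) := hψti_pos _ (by positivity)
  have hρ : 0 < ρ := by positivity
  have hΓ : 0 < Γ := by positivity
  have hρΓ : ρ < Γ := by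
    have h12 : (1 : ℝ) / (2 * R) < 1 / R := by
      rw [div_lt_div_iff₀ (by positivity) hR]; nlinarith
    have := hψti_monolt _ _ (by positivity) h12
    exact inv_strictAnti₀ hψti2R this
  -- ρ ≥ √R
  have hρR : Real.sqrt R ≤ ρ := by
    have hid := hψti_right (1 / R) (by positivity)
    have hψp : 0 < ψ (ψti (1 / R)) := hψ_pos _ hψtiR
    have h1 : (ψti (1 / R)) ^ 2 < 1 / R := by linarith
    have hsR : 0 < Real.sqrt R := Real.sqrt_pos.mpr hR
    have h2 : ψti (1 / R) ≤ (Real.sqrt R)⁻¹ := by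
      have hsq : ((Real.sqrt R)⁻¹) ^ 2 = 1 / R := by
        rw [inv_pow, Real.sq_sqrt hR.le, one_div]
      nlinarith [hψtiR, inv_pos.mpr hsR]
    have h3 : ψti (1 / R) * Real.sqrt R ≤ 1 := by
      have := mul_le_mul_of_nonneg_right h2 (Real.sqrt_nonneg R)
      rwa [inv_mul_cancel₀ hsR.ne'] at this
    rw [hρdef, ← one_div, le_div_iff₀ hψtiR]
    nlinarith
  -- constants
  set ωreal : ℝ := (volume (ball (0 : EuclideanSpace ℝ (Fin n)) 1)).toReal with hωdef
  have hballfin : volume (ball (0 : EuclideanSpace ℝ (Fin n)) 1) ≠ ⊤ :=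
    measure_ball_lt_top.ne
  have hω : 0 < ωreal :=
    ENNReal.toReal_pos (measure_ball_pos _ _ one_pos).ne' hballfin
  have hωeq : volume (ball (0 : EuclideanSpace ℝ (Fin n)) 1) = ENNReal.ofReal ωreal :=
    (ENNReal.ofReal_toReal hballfin).symm
  set q2 : ℝ := (2 : ℝ) ^ ab with hq2def
  have hab0 : 0 < ab := lt_of_lt_of_le hal halab
  have hq2 : 1 < q2 := by
    rw [hq2def]
    rw [Real.one_lt_rpow_iff_of_pos (by norm_num)]
    exact Or.inl ⟨by norm_num, hab0⟩
  have hψρ : 0 < ψ ρ⁻¹ := hψ_pos _ (by positivity)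
  set ZB : ℝ := 2 ^ n * Cb * ψ ρ⁻¹ * (q2 / (q2 - 1)) * (2 * ρ) ^ ab * R ^ (1 - ab / 2)
    with hZBdef
  have hZB : 0 < ZB := by
    have h1 : (0:ℝ) < q2 - 1 := by linarith
    have : (0:ℝ) < (2 * ρ) ^ ab := Real.rpow_pos_of_pos (by positivity) _
    have : (0:ℝ) < R ^ (1 - ab / 2) := Real.rpow_pos_of_pos hR _
    positivity
  set B : ℝ := 2 ^ (n + 4) + ZB + 2 with hBdef
  have hB : 0 < B := by positivity
  refine ⟨C * ωreal * B, C / cR, by positivity, by positivity, ?_⟩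
  intro f hf hf0 x
  set M : ℝ≥0∞ := locMax volume Γ f x with hMdef
  -- Lemma A
  have lemA : ∀ s : ℝ, 0 < s → s < Γ →
      (∫⁻ y in ball x s, ENNReal.ofReal (f y) ∂volume) ≤ volume (ball x s) * M := by
    intro s hs hsΓ
    have habs : (∫⁻ y in ball x s, ENNReal.ofReal (f y) ∂volume)
        = ∫⁻ y in ball x s, ENNReal.ofReal |f y| ∂volume := by
      refine lintegral_congr fun y => ?_
      rw [abs_of_nonneg (hf0 y)]
    have h0 : volume (ball x s) ≠ 0 := (measure_ball_pos _ _ hs).ne'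
    have htop : volume (ball x s) ≠ ⊤ := measure_ball_lt_top.ne
    have h1 : (volume (ball x s))⁻¹ * ∫⁻ y in ball x s, ENNReal.ofReal |f y| ∂volume ≤ M := by
      rw [hMdef, locMax]
      exact le_iSup₂ (f := fun (s : ℝ) (_ : s ∈ Set.Ioo 0 Γ) =>
        (volume (ball x s))⁻¹ * ∫⁻ y in ball x s, ENNReal.ofReal |f y| ∂volume)
        s ⟨hs, hsΓ⟩
    calc (∫⁻ y in ball x s, ENNReal.ofReal (f y) ∂volume)
        = volume (ball x s) * ((volume (ball x s))⁻¹
            * ∫⁻ y in ball x s, ENNReal.ofReal |f y| ∂volume) := by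
          rw [← mul_assoc, ENNReal.mul_inv_cancel h0 htop, one_mul, habs]
      _ ≤ volume (ball x s) * M := mul_le_mul_right h1 _
  -- main per-time estimate
  have key : ∀ t ∈ Set.Ioo 0 R,
      (∫⁻ y, ENNReal.ofReal (q t (x - y) * f y) ∂volume)
        ≤ ENNReal.ofReal (C * ωreal * B) * M
          + ENNReal.ofReal (C / cR) * ∫⁻ y, ENNReal.ofReal (q R (x - y) * f y) ∂volume := by
    rintro t ⟨ht0, htR⟩
    -- far part
    have far : (∫⁻ y in (ball x ρ)ᶜ, ENNReal.ofReal (q t (x - y) * f y) ∂volume)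
        ≤ ENNReal.ofReal (C / cR) * ∫⁻ y, ENNReal.ofReal (q R (x - y) * f y) ∂volume := by
      have hptwise : ∀ y ∈ (ball x ρ)ᶜ,
          ENNReal.ofReal (q t (x - y) * f y)
            ≤ ENNReal.ofReal (C / cR) * ENNReal.ofReal (q R (x - y) * f y) := by
        intro y hy
        have hd : ρ ≤ dist y x := by
          simp only [Set.mem_compl_iff, mem_ball, not_lt] at hy; exact hy
        have hnorm : ‖x - y‖ = dist y x := by rw [dist_eq_norm, norm_sub_rev]
        have hzpos : 0 < ‖x - y‖ := by rw [hnorm]; exact lt_of_lt_of_le hρ hd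
        have hz0 : x - y ≠ 0 := norm_pos_iff.mp hzpos
        have hd' : ρ ≤ ‖x - y‖ := by rw [hnorm]; exact hd
        have hX : 0 ≤ (‖x - y‖⁻¹) ^ 2 + ψ (‖x - y‖⁻¹) :=
          add_nonneg (by positivity) (hψ_pos _ (by positivity)).le
        have h1 : q t (x - y) ≤ C * (t * ((‖x - y‖⁻¹) ^ 2 + ψ (‖x - y‖⁻¹)) / ‖x - y‖ ^ n) :=
          (hq_upper t ht0 htR.le _ hz0).trans
            (mul_le_mul_of_nonneg_left (min_le_right _ _) hC.le)
        have h2 : C * (t * ((‖x - y‖⁻¹) ^ 2 + ψ (‖x - y‖⁻¹)) / ‖x - y‖ ^ n)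
            ≤ C * (R * ((‖x - y‖⁻¹) ^ 2 + ψ (‖x - y‖⁻¹)) / ‖x - y‖ ^ n) := by
          gcongr
        have h3 : C * (R * ((‖x - y‖⁻¹) ^ 2 + ψ (‖x - y‖⁻¹)) / ‖x - y‖ ^ n)
            = (C / cR) * (cR * (R * ((‖x - y‖⁻¹) ^ 2 + ψ (‖x - y‖⁻¹)) / ‖x - y‖ ^ n)) := by
          field_simp
        have h4 : q t (x - y) ≤ (C / cR) * q R (x - y) := by
          refine (h1.trans (h2.trans_eq h3)).trans ?_
          exact mul_le_mul_of_nonneg_left (hq_lower _ hd') (by positivity)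
        calc ENNReal.ofReal (q t (x - y) * f y)
            ≤ ENNReal.ofReal ((C / cR) * (q R (x - y) * f y)) := by
              apply ENNReal.ofReal_le_ofReal
              rw [← mul_assoc]
              exact mul_le_mul_of_nonneg_right h4 (hf0 y)
          _ = ENNReal.ofReal (C / cR) * ENNReal.ofReal (q R (x - y) * f y) :=
              ENNReal.ofReal_mul (by positivity)
      calc (∫⁻ y in (ball x ρ)ᶜ, ENNReal.ofReal (q t (x - y) * f y) ∂volume)
          ≤ ∫⁻ y in (ball x ρ)ᶜ,
              ENNReal.ofReal (C / cR) * ENNReal.ofReal (q R (x - y) * f y) ∂volume :=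
            setLIntegral_mono' measurableSet_ball.compl hptwise
        _ = ENNReal.ofReal (C / cR)
              * ∫⁻ y in (ball x ρ)ᶜ, ENNReal.ofReal (q R (x - y) * f y) ∂volume :=
            lintegral_const_mul' _ _ ENNReal.ofReal_ne_top
        _ ≤ ENNReal.ofReal (C / cR) * ∫⁻ y, ENNReal.ofReal (q R (x - y) * f y) ∂volume :=
            mul_le_mul_right (setLIntegral_le_lintegral _ _) _
    -- near part
    have hnear : (∫⁻ y in ball x ρ, ENNReal.ofReal (q t (x - y) * f y) ∂volume)
        ≤ ENNReal.ofReal (C * ωreal * B) * M := by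
      classical
      set u : ℕ → ℝ := fun k =>
        min (t ^ (-(n : ℝ) / 2))
          (t * (((ρ / 2 ^ (k+1))⁻¹) ^ 2 + ψ ((ρ / 2 ^ (k+1))⁻¹)) / (ρ / 2 ^ (k+1)) ^ n)
          * (ρ / 2 ^ k) ^ n with hudef
      have hrpos : ∀ k : ℕ, (0:ℝ) < ρ / 2 ^ k := fun k => by positivity
      have hm_nonneg : ∀ k : ℕ, 0 ≤ min (t ^ (-(n : ℝ) / 2))
          (t * (((ρ / 2 ^ (k+1))⁻¹) ^ 2 + ψ ((ρ / 2 ^ (k+1))⁻¹)) / (ρ / 2 ^ (k+1)) ^ n) := by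
        intro k
        have h1 : 0 ≤ t ^ (-(n : ℝ) / 2) := Real.rpow_nonneg ht0.le _
        have h2 : 0 < ψ ((ρ / 2 ^ (k+1))⁻¹) := hψ_pos _ (by positivity)
        have h3 : 0 < (ρ / 2 ^ (k+1) : ℝ) := hrpos _
        exact le_min h1 (by positivity)
      have hu_nonneg : ∀ k, 0 ≤ u k := fun k => mul_nonneg (hm_nonneg k) (by positivity)
      have hsub : ball x ρ ⊆ {x} ∪ ⋃ k : ℕ, (ball x (ρ / 2 ^ k) \ ball x (ρ / 2 ^ (k+1))) := by
        intro y hy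
        by_cases hxy : y = x
        · exact Or.inl (by simp [hxy])
        · refine Or.inr (Set.mem_iUnion.mpr ?_)
          have hd0 : 0 < dist y x := dist_pos.mpr hxy
          have hdρ : dist y x < ρ := mem_ball.mp hy
          have hex2 : ∃ k : ℕ, ρ / 2 ^ k ≤ dist y x := by
            obtain ⟨k, hk⟩ := pow_unbounded_of_one_lt (ρ / dist y x) one_lt_two
            refine ⟨k, ?_⟩
            rw [div_le_iff₀ (by positivity)]
            rw [div_lt_iff₀ hd0] at hk
            nlinarith
          have hj := Nat.find_spec hex2
          have hj0 : Nat.find hex2 ≠ 0 := by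
            intro h0
            rw [h0] at hj
            simp only [pow_zero, div_one] at hj
            linarith
          obtain ⟨m0, hm0⟩ := Nat.exists_eq_succ_of_ne_zero hj0
          refine ⟨m0, mem_ball.mpr (not_le.mp (Nat.find_min hex2 (by omega))), ?_⟩
          intro hmem
          have hlt := mem_ball.mp hmem
          rw [hm0] at hj
          simp only [Nat.succ_eq_add_one] at hj
          linarith
      have hAk_bound : ∀ k : ℕ,
          (∫⁻ y in ball x (ρ / 2 ^ k) \ ball x (ρ / 2 ^ (k+1)),
            ENNReal.ofReal (q t (x - y) * f y) ∂volume)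
          ≤ ENNReal.ofReal (C * ωreal) * (ENNReal.ofReal (u k) * M) := by
        intro k
        set mk : ℝ := min (t ^ (-(n : ℝ) / 2))
          (t * (((ρ / 2 ^ (k+1))⁻¹) ^ 2 + ψ ((ρ / 2 ^ (k+1))⁻¹)) / (ρ / 2 ^ (k+1)) ^ n)
          with hmkdef
        have hmk0 : 0 ≤ mk := hm_nonneg k
        have hpt : ∀ y ∈ ball x (ρ / 2 ^ k) \ ball x (ρ / 2 ^ (k+1)),
            ENNReal.ofReal (q t (x - y) * f y)
              ≤ ENNReal.ofReal (C * mk) * ENNReal.ofReal (f y) := by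
          intro y hy
          obtain ⟨hy1, hy2⟩ := hy
          have hd2 : ρ / 2 ^ (k+1) ≤ dist y x := not_lt.mp (fun h => hy2 (mem_ball.mpr h))
          have hnorm : ‖x - y‖ = dist y x := by rw [dist_eq_norm, norm_sub_rev]
          have hdlow : ρ / 2 ^ (k+1) ≤ ‖x - y‖ := by rw [hnorm]; exact hd2
          have hzpos : 0 < ‖x - y‖ := lt_of_lt_of_le (hrpos (k+1)) hdlow
          have hz0 : x - y ≠ 0 := norm_pos_iff.mp hzpos
          have hinv : ‖x - y‖⁻¹ ≤ (ρ / 2 ^ (k+1))⁻¹ := by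
            exact inv_anti₀ (hrpos (k+1)) hdlow
          have hψle : ψ (‖x - y‖⁻¹) ≤ ψ ((ρ / 2 ^ (k+1))⁻¹) := by
            rcases eq_or_lt_of_le hinv with he | hlt
            · rw [he]
            · exact (hψ_mono (Set.mem_Ioi.mpr (by positivity))
                (Set.mem_Ioi.mpr (by positivity)) hlt).le
          have hnum : t * ((‖x - y‖⁻¹) ^ 2 + ψ (‖x - y‖⁻¹))
              ≤ t * (((ρ / 2 ^ (k+1))⁻¹) ^ 2 + ψ ((ρ / 2 ^ (k+1))⁻¹)) := by
            refine mul_le_mul_of_nonneg_left ?_ ht0.le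
            exact add_le_add (pow_le_pow_left₀ (by positivity) hinv 2) hψle
          have hden : (ρ / 2 ^ (k+1)) ^ n ≤ ‖x - y‖ ^ n :=
            pow_le_pow_left₀ (hrpos (k+1)).le hdlow n
          have hmin : min (t ^ (-(n : ℝ) / 2))
              (t * ((‖x - y‖⁻¹) ^ 2 + ψ (‖x - y‖⁻¹)) / ‖x - y‖ ^ n) ≤ mk := by
            refine min_le_min le_rfl ?_
            refine div_le_div₀ ?_ hnum (by positivity) hden
            have h2 : (0:ℝ) < ψ ((ρ / 2 ^ (k+1))⁻¹) := hψ_pos _ (by positivity)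
            positivity
          have hq : q t (x - y) ≤ C * mk :=
            (hq_upper t ht0 htR.le _ hz0).trans (mul_le_mul_of_nonneg_left hmin hC.le)
          calc ENNReal.ofReal (q t (x - y) * f y)
              ≤ ENNReal.ofReal ((C * mk) * f y) :=
                ENNReal.ofReal_le_ofReal (mul_le_mul_of_nonneg_right hq (hf0 y))
            _ = ENNReal.ofReal (C * mk) * ENNReal.ofReal (f y) :=
                ENNReal.ofReal_mul (mul_nonneg hC.le hmk0)
        have hvol : volume (ball x (ρ / 2 ^ k))
            = ENNReal.ofReal ((ρ / 2 ^ k) ^ n) * ENNReal.ofReal ωreal := by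
          rw [Measure.addHaar_ball_of_pos volume x (hrpos k), hωeq,
            finrank_euclideanSpace_fin]
        calc (∫⁻ y in ball x (ρ / 2 ^ k) \ ball x (ρ / 2 ^ (k+1)),
              ENNReal.ofReal (q t (x - y) * f y) ∂volume)
            ≤ ∫⁻ y in ball x (ρ / 2 ^ k) \ ball x (ρ / 2 ^ (k+1)),
                ENNReal.ofReal (C * mk) * ENNReal.ofReal (f y) ∂volume :=
              setLIntegral_mono' (measurableSet_ball.diff measurableSet_ball) hpt
          _ = ENNReal.ofReal (C * mk) * ∫⁻ y in ball x (ρ / 2 ^ k) \ ball x (ρ / 2 ^ (k+1)),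
                ENNReal.ofReal (f y) ∂volume :=
              lintegral_const_mul' _ _ ENNReal.ofReal_ne_top
          _ ≤ ENNReal.ofReal (C * mk) * ∫⁻ y in ball x (ρ / 2 ^ k),
                ENNReal.ofReal (f y) ∂volume :=
              mul_le_mul_right (lintegral_mono_set Set.diff_subset) _
          _ ≤ ENNReal.ofReal (C * mk) * (volume (ball x (ρ / 2 ^ k)) * M) := by
              refine mul_le_mul_right (lemA _ (hrpos k) ?_) _
              exact lt_of_le_of_lt (div_le_self hρ.le (one_le_pow₀ (by norm_num))) hρΓ
          _ = ENNReal.ofReal (C * ωreal) * (ENNReal.ofReal (u k) * M) := by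
              rw [hvol]
              calc ENNReal.ofReal (C * mk)
                    * (ENNReal.ofReal ((ρ / 2 ^ k) ^ n) * ENNReal.ofReal ωreal * M)
                  = (ENNReal.ofReal (C * mk) * ENNReal.ofReal ((ρ / 2 ^ k) ^ n)
                      * ENNReal.ofReal ωreal) * M := by ring
                _ = ENNReal.ofReal (C * ωreal) * (ENNReal.ofReal (u k) * M) := by
                    rw [← ENNReal.ofReal_mul (mul_nonneg hC.le hmk0),
                      ← ENNReal.ofReal_mul (by positivity),
                      ← mul_assoc, ← ENNReal.ofReal_mul (by positivity : (0:ℝ) ≤ C * ωreal)]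
                    congr 1
                    simp only [hmkdef, hudef]
                    ring
      have hsum : ∀ N : ℕ, ∑ k ∈ Finset.range N, u k ≤ B := by
        have hsq0 : 0 < Real.sqrt t := Real.sqrt_pos.mpr ht0
        have hsqt : Real.sqrt t ^ 2 = t := Real.sq_sqrt ht0.le
        have hsqρ : Real.sqrt t < ρ :=
          lt_of_lt_of_le (Real.sqrt_lt_sqrt ht0.le htR) hρR
        have hex : ∃ k : ℕ, ρ / 2 ^ k ≤ Real.sqrt t := by
          obtain ⟨k, hk⟩ := pow_unbounded_of_one_lt (ρ / Real.sqrt t) one_lt_two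
          refine ⟨k, ?_⟩
          rw [div_le_iff₀ (by positivity)]
          rw [div_lt_iff₀ hsq0] at hk
          nlinarith
        set K := Nat.find hex with hKdef
        have hK : ρ / 2 ^ K ≤ Real.sqrt t := Nat.find_spec hex
        have hKpos : K ≠ 0 := by
          intro h0
          rw [h0] at hK
          simp only [pow_zero, div_one] at hK
          linarith
        have hKm : Real.sqrt t < ρ / 2 ^ (K - 1) :=
          not_le.mp (Nat.find_min hex (Nat.sub_lt (Nat.pos_of_ne_zero hKpos) one_pos))
        have h2K : 2 ^ K * Real.sqrt t ≤ 2 * ρ := by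
          have h1 : (2:ℝ) ^ (K-1) * Real.sqrt t < ρ := by
            rw [lt_div_iff₀ (by positivity)] at hKm
            nlinarith
          have h2 : (2:ℝ) ^ K = 2 * 2 ^ (K - 1) := by
            conv_lhs => rw [show K = (K-1)+1 from
              (Nat.succ_pred_eq_of_pos (Nat.pos_of_ne_zero hKpos)).symm]
            rw [pow_succ]; ring
          rw [h2]; nlinarith
        have hi : ∀ k : ℕ, K ≤ k → u k ≤ (1/2 : ℝ) ^ (k - K) := by
          intro k hk
          have h1 : u k ≤ t ^ (-(n:ℝ)/2) * (ρ / 2 ^ k) ^ n := by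
            simp only [hudef]
            exact mul_le_mul_of_nonneg_right (min_le_left _ _) (by positivity)
          have hsqn : Real.sqrt t ^ n = t ^ ((n:ℝ)/2) := by
            rw [Real.sqrt_eq_rpow, ← Real.rpow_natCast (t ^ (1/2 : ℝ)) n,
              ← Real.rpow_mul ht0.le]
            congr 1; ring
          have htr : t ^ (-(n:ℝ)/2) = (Real.sqrt t ^ n)⁻¹ := by
            rw [neg_div, Real.rpow_neg ht0.le, hsqn]
          have h2 : t ^ (-(n:ℝ)/2) * (ρ / 2 ^ k) ^ n = (ρ / 2 ^ k / Real.sqrt t) ^ n := by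
            rw [htr]
            field_simp
            rw [← mul_pow]
            congr 1
            field_simp
          have h3 : ρ / 2 ^ k / Real.sqrt t ≤ (1/2 : ℝ) ^ (k - K) := by
            have hpow : (2:ℝ) ^ k = 2 ^ K * 2 ^ (k - K) := by
              rw [← pow_add]
              congr 1
              omega
            have e1 : ρ / 2 ^ k / Real.sqrt t
                = (ρ / 2 ^ K / Real.sqrt t) * (1/2) ^ (k - K) := by
              rw [hpow, div_pow, one_pow]
              ring
            rw [e1]
            calc (ρ / 2 ^ K / Real.sqrt t) * (1/2) ^ (k - K)
                ≤ 1 * (1/2 : ℝ) ^ (k - K) := by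
                  refine mul_le_mul_of_nonneg_right ?_ (by positivity)
                  rw [div_le_one hsq0]
                  exact hK
              _ = (1/2 : ℝ) ^ (k - K) := one_mul _
          have h4 : (ρ / 2 ^ k / Real.sqrt t) ^ n ≤ ((1/2 : ℝ) ^ (k - K)) ^ n :=
            pow_le_pow_left₀ (by positivity) h3 n
          have h5 : ((1/2 : ℝ) ^ (k - K)) ^ n ≤ ((1/2 : ℝ) ^ (k - K)) ^ 1 :=
            pow_le_pow_of_le_one (by positivity) (pow_le_one₀ (by norm_num) (by norm_num)) hn
          calc u k ≤ t ^ (-(n:ℝ)/2) * (ρ / 2 ^ k) ^ n := h1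
            _ = (ρ / 2 ^ k / Real.sqrt t) ^ n := h2
            _ ≤ ((1/2 : ℝ) ^ (k - K)) ^ n := h4
            _ ≤ ((1/2 : ℝ) ^ (k - K)) ^ 1 := h5
            _ = (1/2 : ℝ) ^ (k - K) := pow_one _
        have hii : ∀ k : ℕ, u k ≤ 2 ^ n * (t * ((4:ℝ) ^ (k+1) / ρ ^ 2))
            + 2 ^ n * (t * ψ ((2:ℝ) ^ (k+1) / ρ)) := by
          intro k
          have hXpos : 0 < ψ ((ρ / 2 ^ (k+1))⁻¹) := hψ_pos _ (by positivity)
          have h1 : u k ≤ (t * (((ρ / 2 ^ (k+1))⁻¹) ^ 2 + ψ ((ρ / 2 ^ (k+1))⁻¹))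
              / (ρ / 2 ^ (k+1)) ^ n) * (ρ / 2 ^ k) ^ n := by
            simp only [hudef]
            exact mul_le_mul_of_nonneg_right (min_le_right _ _) (by positivity)
          have hinv : ((ρ : ℝ) / 2 ^ (k+1))⁻¹ = (2:ℝ) ^ (k+1) / ρ := by
            rw [inv_div]
          have hrk : ((ρ : ℝ) / 2 ^ k) = 2 * (ρ / 2 ^ (k+1)) := by
            rw [pow_succ]
            field_simp
          have hb : ((ρ / 2 ^ (k+1)) ^ n : ℝ) ≠ 0 := by positivity
          have hcalc : (t * (((ρ / 2 ^ (k+1))⁻¹) ^ 2 + ψ ((ρ / 2 ^ (k+1))⁻¹))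
              / (ρ / 2 ^ (k+1)) ^ n) * (ρ / 2 ^ k) ^ n
              = 2 ^ n * (t * (((2:ℝ) ^ (k+1) / ρ) ^ 2))
                + 2 ^ n * (t * ψ ((2:ℝ) ^ (k+1) / ρ)) := by
            rw [hrk, mul_pow, hinv]
            field_simp
          have h4p : (((2:ℝ) ^ (k+1)) / ρ) ^ 2 = (4:ℝ) ^ (k+1) / ρ ^ 2 := by
            rw [div_pow]
            congr 1
            rw [← pow_mul, show (4:ℝ) = 2 ^ 2 by norm_num, ← pow_mul, mul_comm]
          calc u k ≤ (t * (((ρ / 2 ^ (k+1))⁻¹) ^ 2 + ψ ((ρ / 2 ^ (k+1))⁻¹))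
              / (ρ / 2 ^ (k+1)) ^ n) * (ρ / 2 ^ k) ^ n := h1
            _ = 2 ^ n * (t * (((2:ℝ) ^ (k+1) / ρ) ^ 2))
                + 2 ^ n * (t * ψ ((2:ℝ) ^ (k+1) / ρ)) := hcalc
            _ = 2 ^ n * (t * ((4:ℝ) ^ (k+1) / ρ ^ 2))
                + 2 ^ n * (t * ψ ((2:ℝ) ^ (k+1) / ρ)) := by rw [h4p]
        have hYsum : ∑ k ∈ Finset.range K, 2 ^ n * (t * ((4:ℝ) ^ (k+1) / ρ ^ 2))
            ≤ 2 ^ (n+4) := by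
          have hgeom : ∑ k ∈ Finset.range K, (4:ℝ) ^ k = ((4:ℝ) ^ K - 1) / 3 := by
            rw [geom_sum_eq (by norm_num : (4:ℝ) ≠ 1)]
            norm_num
          have h4K : t * 4 ^ K ≤ 4 * ρ ^ 2 := by
            have h1 : ((2:ℝ) ^ K * Real.sqrt t) ^ 2 ≤ (2 * ρ) ^ 2 :=
              pow_le_pow_left₀ (by positivity) h2K 2
            have h2 : ((2:ℝ) ^ K) ^ 2 = 4 ^ K := by
              rw [← pow_mul, mul_comm, pow_mul]; norm_num
            nlinarith
          have hsum4 : ∑ k ∈ Finset.range K, 2 ^ n * (t * ((4:ℝ) ^ (k+1) / ρ ^ 2))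
              = (2 ^ n * t / ρ ^ 2 * 4) * ∑ k ∈ Finset.range K, (4:ℝ) ^ k := by
            rw [Finset.mul_sum]
            refine Finset.sum_congr rfl fun k _ => ?_
            rw [pow_succ]
            ring
          rw [hsum4, hgeom]
          have hstep : (2 ^ n * t / ρ ^ 2 * 4 : ℝ) * (((4:ℝ) ^ K - 1) / 3)
              = (2 ^ n * 4 / 3) * ((t * ((4:ℝ) ^ K - 1)) / ρ ^ 2) := by ring
          rw [hstep]
          have hX4 : (t * ((4:ℝ) ^ K - 1)) / ρ ^ 2 ≤ 4 := by
            rw [div_le_iff₀ (by positivity)]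
            nlinarith
          have hexp : (2:ℝ) ^ (n+4) = 2 ^ n * 16 := by rw [pow_add]; norm_num
          rw [hexp]
          nlinarith [mul_le_mul_of_nonneg_left hX4
            (show (0:ℝ) ≤ 2 ^ n * 4 / 3 by positivity),
            show (0:ℝ) ≤ 2 ^ n by positivity]
        have hq2pow : ∀ j : ℕ, ((2:ℝ) ^ j) ^ ab = q2 ^ j := by
          intro j
          rw [← Real.rpow_natCast (2:ℝ) j, ← Real.rpow_mul (by norm_num : (0:ℝ) ≤ 2),
            mul_comm, Real.rpow_mul (by norm_num : (0:ℝ) ≤ 2), Real.rpow_natCast,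
            ← hq2def]
        have hZsum : ∑ k ∈ Finset.range K, 2 ^ n * (t * ψ ((2:ℝ) ^ (k+1) / ρ)) ≤ ZB := by
          have hq21 : (0:ℝ) < q2 - 1 := by linarith
          have hterm : ∀ k ∈ Finset.range K, 2 ^ n * (t * ψ ((2:ℝ) ^ (k+1) / ρ))
              ≤ (2 ^ n * Cb * ψ ρ⁻¹ * t) * q2 ^ (k+1) := by
            intro k _
            have h1 : ψ ((2:ℝ) ^ (k+1) / ρ) ≤ Cb * ((2:ℝ) ^ (k+1)) ^ ab * ψ ρ⁻¹ := by
              have h := (hscale ((2:ℝ) ^ (k+1)) ρ⁻¹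
                (one_le_pow₀ (by norm_num)) (by positivity)).2
              rw [div_eq_mul_inv]
              exact h
            calc 2 ^ n * (t * ψ ((2:ℝ) ^ (k+1) / ρ))
                ≤ 2 ^ n * (t * (Cb * ((2:ℝ) ^ (k+1)) ^ ab * ψ ρ⁻¹)) := by
                  refine mul_le_mul_of_nonneg_left
                    (mul_le_mul_of_nonneg_left h1 ht0.le) (by positivity)
              _ = (2 ^ n * Cb * ψ ρ⁻¹ * t) * q2 ^ (k+1) := by rw [hq2pow]; ring
          have hgeomq : ∑ k ∈ Finset.range K, q2 ^ (k+1)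
              = (q2 ^ K - 1) / (q2 - 1) * q2 := by
            have h : ∑ k ∈ Finset.range K, q2 ^ (k+1)
                = (∑ k ∈ Finset.range K, q2 ^ k) * q2 := by
              rw [Finset.sum_mul]
              exact Finset.sum_congr rfl fun k _ => pow_succ q2 k
            rw [h, geom_sum_eq hq2.ne' K]
          have hq2K : t * q2 ^ K ≤ (2 * ρ) ^ ab * R ^ (1 - ab / 2) := by
            have h1 : (2:ℝ) ^ K ≤ 2 * ρ / Real.sqrt t := by
              rw [le_div_iff₀ hsq0]; exact h2K
            have h2 : q2 ^ K ≤ ((2 * ρ) / Real.sqrt t) ^ ab := by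
              rw [← hq2pow K]
              exact Real.rpow_le_rpow (by positivity) h1 hab0.le
            have h3 : ((2 * ρ) / Real.sqrt t) ^ ab = (2 * ρ) ^ ab / t ^ (ab/2 : ℝ) := by
              rw [Real.div_rpow (by positivity) (Real.sqrt_nonneg t)]
              congr 1
              rw [Real.sqrt_eq_rpow, ← Real.rpow_mul ht0.le]
              congr 1; ring
            have h4 : t * ((2 * ρ) ^ ab / t ^ (ab/2 : ℝ))
                = (2 * ρ) ^ ab * t ^ (1 - ab/2 : ℝ) := by
              rw [Real.rpow_sub ht0, Real.rpow_one]
              ring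
            have h5 : t ^ (1 - ab/2 : ℝ) ≤ R ^ (1 - ab/2 : ℝ) :=
              Real.rpow_le_rpow ht0.le htR.le (by linarith)
            calc t * q2 ^ K ≤ t * ((2 * ρ) ^ ab / t ^ (ab/2 : ℝ)) :=
                  mul_le_mul_of_nonneg_left (h2.trans_eq h3) ht0.le
              _ = (2 * ρ) ^ ab * t ^ (1 - ab/2 : ℝ) := h4
              _ ≤ (2 * ρ) ^ ab * R ^ (1 - ab/2 : ℝ) :=
                  mul_le_mul_of_nonneg_left h5 (Real.rpow_nonneg (by positivity) _)
          calc ∑ k ∈ Finset.range K, 2 ^ n * (t * ψ ((2:ℝ) ^ (k+1) / ρ))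
              ≤ ∑ k ∈ Finset.range K, (2 ^ n * Cb * ψ ρ⁻¹ * t) * q2 ^ (k+1) :=
                Finset.sum_le_sum hterm
            _ = (2 ^ n * Cb * ψ ρ⁻¹) * ((q2 / (q2 - 1)) * (t * (q2 ^ K - 1))) := by
                rw [← Finset.mul_sum, hgeomq]
                ring
            _ ≤ (2 ^ n * Cb * ψ ρ⁻¹) * ((q2 / (q2 - 1))
                  * ((2 * ρ) ^ ab * R ^ (1 - ab/2 : ℝ))) := by
                refine mul_le_mul_of_nonneg_left ?_ (by positivity)
                refine mul_le_mul_of_nonneg_left ?_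
                  (div_nonneg (by positivity) hq21.le)
                calc t * (q2 ^ K - 1) ≤ t * q2 ^ K := by nlinarith
                  _ ≤ _ := hq2K
            _ = ZB := by rw [hZBdef]; ring
        intro N
        have h1 : ∑ k ∈ Finset.range N, u k ≤ ∑ k ∈ Finset.range (max N K), u k :=
          Finset.sum_le_sum_of_subset_of_nonneg
            (Finset.range_subset_range.mpr (le_max_left _ _)) (fun i _ _ => hu_nonneg i)
        have hsplit : ∑ k ∈ Finset.range (max N K), u k
            = ∑ k ∈ Finset.range K, u k + ∑ k ∈ Finset.Ico K (max N K), u k := by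
          simp only [Finset.range_eq_Ico]
          exact (Finset.sum_Ico_consecutive _ (Nat.zero_le K) (le_max_right N K)).symm
        have hA : ∑ k ∈ Finset.range K, u k ≤ 2 ^ (n+4) + ZB := by
          calc ∑ k ∈ Finset.range K, u k
              ≤ ∑ k ∈ Finset.range K, (2 ^ n * (t * ((4:ℝ) ^ (k+1) / ρ ^ 2))
                + 2 ^ n * (t * ψ ((2:ℝ) ^ (k+1) / ρ))) :=
                Finset.sum_le_sum (fun k _ => hii k)
            _ = (∑ k ∈ Finset.range K, 2 ^ n * (t * ((4:ℝ) ^ (k+1) / ρ ^ 2)))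
                + ∑ k ∈ Finset.range K, 2 ^ n * (t * ψ ((2:ℝ) ^ (k+1) / ρ)) :=
                Finset.sum_add_distrib
            _ ≤ 2 ^ (n+4) + ZB := add_le_add hYsum hZsum
        have hTail : ∑ k ∈ Finset.Ico K (max N K), u k ≤ 2 := by
          calc ∑ k ∈ Finset.Ico K (max N K), u k
              ≤ ∑ k ∈ Finset.Ico K (max N K), (1/2 : ℝ) ^ (k - K) :=
                Finset.sum_le_sum (fun k hk => hi k (Finset.mem_Ico.mp hk).1)
            _ = ∑ j ∈ Finset.range (max N K - K), (1/2 : ℝ) ^ j := by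
                rw [Finset.sum_Ico_eq_sum_range]
                exact Finset.sum_congr rfl fun j _ => by rw [Nat.add_sub_cancel_left]
            _ ≤ 2 := sum_geometric_two_le _
        rw [hBdef]
        linarith
      have husum : (∑' k : ℕ, ENNReal.ofReal (u k)) ≤ ENNReal.ofReal B :=
        tsum_ofReal_le_of_partial hu_nonneg hsum
      calc (∫⁻ y in ball x ρ, ENNReal.ofReal (q t (x - y) * f y) ∂volume)
          ≤ ∫⁻ y in {x} ∪ ⋃ k : ℕ, (ball x (ρ / 2 ^ k) \ ball x (ρ / 2 ^ (k+1))),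
              ENNReal.ofReal (q t (x - y) * f y) ∂volume := lintegral_mono_set hsub
        _ ≤ (∫⁻ y in ({x} : Set (EuclideanSpace ℝ (Fin n))),
              ENNReal.ofReal (q t (x - y) * f y) ∂volume)
            + ∫⁻ y in ⋃ k : ℕ, (ball x (ρ / 2 ^ k) \ ball x (ρ / 2 ^ (k+1))),
              ENNReal.ofReal (q t (x - y) * f y) ∂volume := lintegral_union_le _ _ _
        _ ≤ 0 + ∑' k : ℕ, ∫⁻ y in ball x (ρ / 2 ^ k) \ ball x (ρ / 2 ^ (k+1)),
              ENNReal.ofReal (q t (x - y) * f y) ∂volume := by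
            refine add_le_add ?_ (lintegral_iUnion_le _ _)
            rw [setLIntegral_measure_zero _ _ (measure_singleton x)]
        _ = ∑' k : ℕ, ∫⁻ y in ball x (ρ / 2 ^ k) \ ball x (ρ / 2 ^ (k+1)),
              ENNReal.ofReal (q t (x - y) * f y) ∂volume := zero_add _
        _ ≤ ∑' k : ℕ, ENNReal.ofReal (C * ωreal) * (ENNReal.ofReal (u k) * M) :=
            ENNReal.tsum_le_tsum hAk_bound
        _ = ENNReal.ofReal (C * ωreal) * ((∑' k : ℕ, ENNReal.ofReal (u k)) * M) := by
            rw [ENNReal.tsum_mul_left, ENNReal.tsum_mul_right]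
        _ ≤ ENNReal.ofReal (C * ωreal) * (ENNReal.ofReal B * M) :=
            mul_le_mul_right (mul_le_mul_left husum M) _
        _ = ENNReal.ofReal (C * ωreal * B) * M := by
            rw [ENNReal.ofReal_mul (by positivity : (0:ℝ) ≤ C * ωreal), mul_assoc]
    calc (∫⁻ y, ENNReal.ofReal (q t (x - y) * f y) ∂volume)
        = (∫⁻ y in ball x ρ, ENNReal.ofReal (q t (x - y) * f y) ∂volume)
          + ∫⁻ y in (ball x ρ)ᶜ, ENNReal.ofReal (q t (x - y) * f y) ∂volume :=
          (lintegral_add_compl _ measurableSet_ball).symm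
      _ ≤ _ := add_le_add hnear far
  exact iSup_le fun t => iSup_le fun ht => key t ht
end

section
/- Let n ≥ 1, let ψ be a weak-scaling function as in the context, let (p_t)_{t>0} satisfy the two-sided bound in the context with constant C, let p̂_t(x) = (4πt)^{-n/2} e^{-|x|²/(4t)} be the Gaussian kernel, and set p̃_t = p̂_t ∗ p_t. Then for every R > 0 and all x₁, x₂ ∈ ℝⁿ there exists a constant K = K(R, x₁, x₂) such that p̃_{R/4}(x₁ − y) ≤ K p̃_R(x₂ − y) for all y ∈ ℝⁿ. -/
open MeasureTheory Metric ENNReal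

/-- The convolved kernel `p̃_t = p̂_t ∗ p_t`. -/
noncomputable def mixedKer (n : ℕ) (p : ℝ → EuclideanSpace ℝ (Fin n) → ℝ)
    (t : ℝ) (x : EuclideanSpace ℝ (Fin n)) : ℝ :=
  ∫ y, gaussKer n t (x - y) * p t y ∂volume

lemma integrable_gauss_aux (n : ℕ) {b : ℝ} (hb : 0 < b) :
    Integrable (fun v : EuclideanSpace ℝ (Fin n) => Real.exp (-b * ‖v‖ ^ 2)) := by
  have h := (GaussianFourier.integrable_cexp_neg_mul_sq_norm_add
    (V := EuclideanSpace ℝ (Fin n)) (b := (b : ℂ)) (by simpa using hb) 0 0).norm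
  simpa [Complex.norm_exp, ← Complex.ofReal_pow, Complex.ofReal_re] using h

lemma gauss_nonneg (n : ℕ) {t : ℝ} (ht : 0 < t) (x : EuclideanSpace ℝ (Fin n)) :
    0 ≤ gaussKer n t x := by
  have := Real.pi_pos
  unfold gaussKer; positivity

lemma gauss_comp (n : ℕ) {R : ℝ} (hR : 0 < R) (v x : EuclideanSpace ℝ (Fin n)) :
    gaussKer n (R/4) x ≤ 2^n * Real.exp (‖v‖^2/(3*R)) * gaussKer n R (x - v) := by
  have hπ := Real.pi_pos
  have hπR : (0:ℝ) ≤ Real.pi * R := by positivity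
  have hcoef : 2^n * ((4:ℝ)*Real.pi*R) ^ (-(n:ℝ)/2) = (Real.pi * R) ^ (-(n:ℝ)/2) := by
    have h2 : (4:ℝ) ^ (-(n:ℝ)/2) = ((2:ℝ)^n)⁻¹ := by
      rw [show (4:ℝ) = (2:ℝ)^(2:ℕ) by norm_num, ← Real.rpow_natCast (2:ℝ) 2,
        ← Real.rpow_mul (by norm_num)]
      rw [show ((2:ℕ):ℝ) * (-(n:ℝ)/2) = -(n:ℝ) by push_cast; ring]
      rw [Real.rpow_neg (by norm_num), Real.rpow_natCast]
    rw [show (4:ℝ)*Real.pi*R = 4 * (Real.pi*R) by ring,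
      Real.mul_rpow (by norm_num) hπR, h2, ← mul_assoc,
      mul_inv_cancel₀ (by positivity : (0:ℝ) < 2^n).ne', one_mul]
  have hexp : Real.exp (-‖x‖^2/(4*(R/4))) ≤
      Real.exp (‖v‖^2/(3*R)) * Real.exp (-‖x - v‖^2/(4*R)) := by
    rw [← Real.exp_add]
    apply Real.exp_le_exp.mpr
    have hw : ‖x - v‖ ≤ ‖x‖ + ‖v‖ := norm_sub_le x v
    have h3 : 3 * ‖x - v‖^2 ≤ 12*‖x‖^2 + 4*‖v‖^2 := by
      nlinarith [sq_nonneg (3*‖x‖ - ‖v‖), norm_nonneg x, norm_nonneg v, norm_nonneg (x - v)]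
    have h1 : -‖x‖^2 ≤ ‖v‖^2/3 + -(‖x - v‖^2/4) := by linarith
    calc -‖x‖^2/(4*(R/4)) = (-‖x‖^2) * R⁻¹ := by field_simp
      _ ≤ (‖v‖^2/3 + -(‖x-v‖^2/4)) * R⁻¹ := mul_le_mul_of_nonneg_right h1 (by positivity)
      _ = ‖v‖^2/(3*R) + -‖x-v‖^2/(4*R) := by field_simp
  simp only [gaussKer]
  rw [show 4*Real.pi*(R/4) = Real.pi * R by ring]
  calc (Real.pi*R) ^ (-(n:ℝ)/2) * Real.exp (-‖x‖^2/(4*(R/4)))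
      ≤ (Real.pi*R) ^ (-(n:ℝ)/2) *
        (Real.exp (‖v‖^2/(3*R)) * Real.exp (-‖x-v‖^2/(4*R))) :=
        mul_le_mul_of_nonneg_left hexp (by positivity)
    _ = 2^n * Real.exp (‖v‖^2/(3*R)) * ((4*Real.pi*R) ^ (-(n:ℝ)/2) * Real.exp (-‖x-v‖^2/(4*R))) := by
        rw [← hcoef]; ring

/-- Harnack-type comparability for the mixed local-nonlocal kernel
`p̃_t = p̂_t ∗ p_t`: for every `R > 0` and `x₁, x₂ ∈ ℝⁿ` there is `K = K(R,x₁,x₂)` with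
`p̃_{R/4}(x₁ − y) ≤ K p̃_R(x₂ − y)` for all `y`. -/
theorem stmt_9 (n : ℕ) (hn : 1 ≤ n)
    (ψ ψi : ℝ → ℝ)
    (hψ_pos : ∀ θ : ℝ, 0 < θ → 0 < ψ θ)
    (hψ_cont : ContinuousOn ψ (Set.Ioi 0))
    (hψ_mono : StrictMonoOn ψ (Set.Ioi 0))
    (hψi_pos : ∀ s : ℝ, 0 < s → 0 < ψi s)
    (hψi_right : ∀ s : ℝ, 0 < s → ψ (ψi s) = s)
    (hψi_left : ∀ θ : ℝ, 0 < θ → ψi (ψ θ) = θ)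
    (al ab cl Cb : ℝ)
    (hal : 0 < al) (halab : al ≤ ab) (hab : ab < 2)
    (hcl : 0 < cl) (hcl1 : cl ≤ 1) (hCb : 1 ≤ Cb)
    (hscale : ∀ lam θ : ℝ, 1 ≤ lam → 0 < θ →
      cl * lam ^ al * ψ θ ≤ ψ (lam * θ) ∧ ψ (lam * θ) ≤ Cb * lam ^ ab * ψ θ)
    (p : ℝ → EuclideanSpace ℝ (Fin n) → ℝ)
    (hp_nonneg : ∀ t : ℝ, 0 < t → ∀ x, 0 ≤ p t x)
    (hp_meas : ∀ t : ℝ, 0 < t → Measurable (p t))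
    (C : ℝ) (hC : 1 ≤ C)
    (hbound : ∀ t : ℝ, 0 < t → ∀ x : EuclideanSpace ℝ (Fin n), x ≠ 0 →
      C⁻¹ * min ((ψi (1 / t)) ^ n) (t * ψ (‖x‖⁻¹) / ‖x‖ ^ n) ≤ p t x ∧
      p t x ≤ C * min ((ψi (1 / t)) ^ n) (t * ψ (‖x‖⁻¹) / ‖x‖ ^ n)) :
    ∀ R : ℝ, 0 < R → ∀ x₁ x₂ : EuclideanSpace ℝ (Fin n),
      ∃ K : ℝ, 0 < K ∧ ∀ y : EuclideanSpace ℝ (Fin n),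
        mixedKer n p (R / 4) (x₁ - y) ≤ K * mixedKer n p R (x₂ - y) := by
  intro R hR x₁ x₂
  have hC0 : (0:ℝ) < C := by linarith
  have hR4 : (0:ℝ) < R / 4 := by linarith
  set lam : ℝ := (4 / cl) ^ (1 / al) with hlam_def
  have h4cl : (1:ℝ) ≤ 4 / cl := by rw [le_div_iff₀ hcl]; linarith
  have hlam1 : (1:ℝ) ≤ lam := by
    rw [hlam_def]
    calc (1:ℝ) = 1 ^ (1/al) := (Real.one_rpow _).symm
      _ ≤ (4/cl) ^ (1/al) :=
        Real.rpow_le_rpow (by norm_num) h4cl (by positivity)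
  have hlam0 : (0:ℝ) < lam := lt_of_lt_of_le one_pos hlam1
  have hlamn1 : (1:ℝ) ≤ lam ^ n := by
    have := pow_le_pow_left₀ (by norm_num : (0:ℝ) ≤ 1) hlam1 n
    simpa using this
  -- ψi(4s) ≤ lam ψi(s)
  have hpsi : ∀ s : ℝ, 0 < s → ψi (4 * s) ≤ lam * ψi s := by
    intro s hs
    have h4s : (0:ℝ) < 4 * s := by linarith
    have hψis : 0 < ψi s := hψi_pos s hs
    have hlam_al : lam ^ al = 4 / cl := by
      rw [hlam_def, ← Real.rpow_mul (by positivity : (0:ℝ) ≤ 4/cl),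
        one_div_mul_cancel hal.ne', Real.rpow_one]
    have hkey := (hscale lam (ψi s) hlam1 hψis).1
    rw [hψi_right s hs, hlam_al] at hkey
    rw [show cl * (4/cl) * s = 4*s by field_simp] at hkey
    have hmem1 : ψi (4*s) ∈ Set.Ioi (0:ℝ) := hψi_pos _ h4s
    have hmem2 : lam * ψi s ∈ Set.Ioi (0:ℝ) := Set.mem_Ioi.mpr (by positivity)
    exact (hψ_mono.le_iff_le hmem1 hmem2).mp (by rw [hψi_right _ h4s]; exact hkey)
  -- comparison of the jump kernels
  have hpcomp : ∀ z : EuclideanSpace ℝ (Fin n), z ≠ 0 →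
      p (R/4) z ≤ C^2 * lam^n * p R z := by
    intro z hz
    have hz0 : (0:ℝ) < ‖z‖ := norm_pos_iff.mpr hz
    have hzn : (0:ℝ) < ‖z‖^n := by positivity
    have hzinv : (0:ℝ) < ‖z‖⁻¹ := by positivity
    have hψz : 0 < ψ (‖z‖⁻¹) := hψ_pos _ hzinv
    have hub := (hbound (R/4) hR4 z hz).2
    have hlb := (hbound R hR z hz).1
    rw [show (1:ℝ) / (R/4) = 4 * (1/R) by field_simp] at hub
    have ha : ψi (4*(1/R)) ^ n ≤ lam^n * ψi (1/R) ^ n := by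
      calc ψi (4*(1/R))^n ≤ (lam * ψi (1/R))^n :=
            pow_le_pow_left₀ (le_of_lt (hψi_pos _ (by positivity)))
              (hpsi (1/R) (by positivity)) n
        _ = lam^n * ψi (1/R)^n := mul_pow _ _ _
    have hb' : (R/4) * ψ (‖z‖⁻¹) / ‖z‖^n ≤ lam^n * (R * ψ (‖z‖⁻¹) / ‖z‖^n) := by
      have h1 : (R/4) * ψ (‖z‖⁻¹) / ‖z‖^n ≤ R * ψ (‖z‖⁻¹) / ‖z‖^n :=
        (div_le_div_iff_of_pos_right hzn).mpr
          (mul_le_mul_of_nonneg_right (by linarith) hψz.le)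
      have hpos : (0:ℝ) ≤ R * ψ (‖z‖⁻¹) / ‖z‖^n := by positivity
      nlinarith
    have hmin : min (ψi (4*(1/R))^n) ((R/4) * ψ (‖z‖⁻¹)/‖z‖^n)
        ≤ lam^n * min (ψi (1/R)^n) (R * ψ (‖z‖⁻¹)/‖z‖^n) := by
      rcases le_total (ψi (1/R)^n) (R * ψ (‖z‖⁻¹)/‖z‖^n) with h | h
      · rw [min_eq_left h]; exact le_trans (min_le_left _ _) ha
      · rw [min_eq_right h]; exact le_trans (min_le_right _ _) hb'
    have hlb' : min (ψi (1/R)^n) (R * ψ (‖z‖⁻¹)/‖z‖^n) ≤ C * p R z :=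
      (inv_mul_le_iff₀ hC0).mp hlb
    calc p (R/4) z ≤ C * min (ψi (4*(1/R))^n) ((R/4) * ψ (‖z‖⁻¹)/‖z‖^n) := hub
      _ ≤ C * (lam^n * (C * p R z)) := by
          refine mul_le_mul_of_nonneg_left ?_ hC0.le
          exact le_trans hmin (mul_le_mul_of_nonneg_left hlb' (by positivity))
      _ = C^2 * lam^n * p R z := by ring
  -- a.e. nonzero
  haveI : Nontrivial (EuclideanSpace ℝ (Fin n)) := by
    refine ⟨⟨EuclideanSpace.single ⟨0, hn⟩ 1, 0, fun h => ?_⟩⟩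
    have := congrArg (fun v : EuclideanSpace ℝ (Fin n) => v ⟨0, hn⟩) h
    simp [EuclideanSpace.single] at this
  have hzero : ∀ᵐ z : EuclideanSpace ℝ (Fin n) ∂volume, z ≠ 0 := by
    rw [ae_iff]
    simp only [not_not]
    simpa [Set.setOf_eq_eq_singleton] using measure_singleton (0 : EuclideanSpace ℝ (Fin n))
  refine ⟨2^n * Real.exp (‖x₁ - x₂‖^2/(3*R)) * (C^2 * lam^n), by positivity, ?_⟩
  intro y
  -- integrability of the R-kernel integrand
  have hgauss_cont : Continuous fun z : EuclideanSpace ℝ (Fin n) =>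
      gaussKer n R ((x₂ - y) - z) := by
    simp only [gaussKer]; fun_prop
  have hgauss_int : Integrable (fun z : EuclideanSpace ℝ (Fin n) =>
      gaussKer n R ((x₂ - y) - z)) := by
    have h0 := (integrable_gauss_aux n (by positivity : (0:ℝ) < (4*R)⁻¹)).comp_sub_left (x₂ - y)
    have h1 := h0.const_mul ((4*Real.pi*R) ^ (-(n:ℝ)/2))
    refine h1.congr (Filter.Eventually.of_forall fun z => ?_)
    simp only [gaussKer]
    congr 1
    congr 1
    ring
  have hg_int : Integrable (fun z : EuclideanSpace ℝ (Fin n) =>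
      gaussKer n R ((x₂ - y) - z) * p R z) := by
    have hmeas : AEStronglyMeasurable (fun z : EuclideanSpace ℝ (Fin n) =>
        gaussKer n R ((x₂ - y) - z) * p R z) volume :=
      (hgauss_cont.measurable.mul (hp_meas R hR)).aestronglyMeasurable
    refine Integrable.mono' (hgauss_int.const_mul (C * ψi (1/R)^n)) hmeas ?_
    filter_upwards [hzero] with z hz
    have hgz := gauss_nonneg n hR ((x₂ - y) - z)
    have hpz := hp_nonneg R hR z
    rw [Real.norm_eq_abs, abs_of_nonneg (mul_nonneg hgz hpz)]
    have hple : p R z ≤ C * ψi (1/R)^n :=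
      le_trans (hbound R hR z hz).2
        (mul_le_mul_of_nonneg_left (min_le_left _ _) hC0.le)
    calc gaussKer n R ((x₂ - y) - z) * p R z
        ≤ gaussKer n R ((x₂ - y) - z) * (C * ψi (1/R)^n) :=
          mul_le_mul_of_nonneg_left hple hgz
      _ = C * ψi (1/R)^n * gaussKer n R ((x₂ - y) - z) := by ring
  -- pointwise comparison a.e.
  have hptwise : ∀ᵐ z : EuclideanSpace ℝ (Fin n) ∂volume,
      gaussKer n (R/4) ((x₁ - y) - z) * p (R/4) z ≤
      2^n * Real.exp (‖x₁ - x₂‖^2/(3*R)) * (C^2 * lam^n) *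
        (gaussKer n R ((x₂ - y) - z) * p R z) := by
    filter_upwards [hzero] with z hz
    have h1 := gauss_comp n hR (x₁ - x₂) ((x₁ - y) - z)
    rw [show ((x₁ - y) - z) - (x₁ - x₂) = (x₂ - y) - z by abel] at h1
    have h2 := hpcomp z hz
    have hKg0 : (0:ℝ) ≤ 2^n * Real.exp (‖x₁ - x₂‖^2/(3*R)) *
        gaussKer n R ((x₂ - y) - z) := by
      have := gauss_nonneg n hR ((x₂ - y) - z)
      positivity
    calc gaussKer n (R/4) ((x₁ - y) - z) * p (R/4) z
        ≤ (2^n * Real.exp (‖x₁ - x₂‖^2/(3*R)) * gaussKer n R ((x₂ - y) - z)) *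
            (C^2 * lam^n * p R z) :=
          mul_le_mul h1 h2 (hp_nonneg _ hR4 z) hKg0
      _ = 2^n * Real.exp (‖x₁ - x₂‖^2/(3*R)) * (C^2 * lam^n) *
            (gaussKer n R ((x₂ - y) - z) * p R z) := by ring
  -- conclude
  simp only [mixedKer]
  calc (∫ z, gaussKer n (R/4) ((x₁ - y) - z) * p (R/4) z ∂volume)
      ≤ ∫ z, 2^n * Real.exp (‖x₁ - x₂‖^2/(3*R)) * (C^2 * lam^n) *
          (gaussKer n R ((x₂ - y) - z) * p R z) ∂volume :=
        integral_mono_of_nonneg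
          (Filter.Eventually.of_forall fun z =>
            mul_nonneg (gauss_nonneg n hR4 _) (hp_nonneg _ hR4 z))
          (hg_int.const_mul _) hptwise
    _ = 2^n * Real.exp (‖x₁ - x₂‖^2/(3*R)) * (C^2 * lam^n) *
          ∫ z, gaussKer n R ((x₂ - y) - z) * p R z ∂volume :=
        integral_const_mul _ _
end
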